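/- arXiv:1605.00863 — 4 statements merged into one kernel-verified Lean document; each statement's English description precedes it below -/
import Mathlib

section
/- Suppose that the (dk,Δ)-bipartite graph H has been constructed by the 2-step method from the connected (d,Δ)-bipartite graph H0 and the [Δ,k]-transversal design T. If H0 has line-diameter λ ≥ 4 then H has line-diameter λ. -/
/-- The bipartite graph on `ν ⊕ β` (nodes on the left, blocks on the right)
determined by the adjacency relation `adj`. -/
def bipGraph {ν β : Type} (adj : ν → β → Prop) : SimpleGraph (ν ⊕ β) :=
  SimpleGraph.fromRel fun u v => ∃ x b, u = Sum.inl x ∧ v = Sum.inr b ∧ adj x b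

/-- A `[Δ,k]`-transversal design: the nodes form a set of size `Δ * k` partitioned
into `Δ` groups (the fibres of `group`), each of size `k`; there are `k ^ 2` blocks;
every block is adjacent to exactly one node of each group; and every pair of nodes
lying in distinct groups is adjacent to exactly one common block (the block
*generated* by the pair). -/
structure IsTransversalDesign {ν β : Type} (Δ k : ℕ)
    (group : ν → Fin Δ) (adj : ν → β → Prop) : Prop where
  two_le_k : 2 ≤ k
  two_le_Δ : 2 ≤ Δ
  groupCard : ∀ i : Fin Δ, Nat.card {x : ν // group x = i} = k
  blockCard : Nat.card β = k ^ 2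
  blockMeets : ∀ (b : β) (i : Fin Δ), ∃! x : ν, group x = i ∧ adj x b
  pairGen : ∀ x y : ν, group x ≠ group y → ∃! b : β, adj x b ∧ adj y b

/-- A family of walks (with sources `s i` and destinations `t i`) is pairwise
internally-disjoint if every vertex which is a source or destination of some member
of the family appears on members of the family only as their source or destination,
and every vertex which is not a source or destination of any member of the family
lies on at most one member of the family. -/
def PairwiseInternallyDisjoint {V ι : Type} {G : SimpleGraph V} {s t : ι → V}
    (p : (i : ι) → G.Walk (s i) (t i)) : Prop :=
  (∀ i j : ι, ∀ v : V, v ∈ (p i).support → (v = s j ∨ v = t j) → v = s i ∨ v = t i) ∧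
  (∀ i j : ι, ∀ v : V, (∀ l : ι, v ≠ s l ∧ v ≠ t l) →
    v ∈ (p i).support → v ∈ (p j).support → i = j)

/-- A family of walks is pairwise edge-disjoint if every edge lies on at most one
member of the family. -/
def PairwiseEdgeDisjoint {V ι : Type} {G : SimpleGraph V} {s t : ι → V}
    (p : (i : ι) → G.Walk (s i) (t i)) : Prop :=
  ∀ i j : ι, ∀ e : Sym2 V, e ∈ (p i).edges → e ∈ (p j).edges → i = j

/-- A `(d,Δ)`-bipartite graph: every node has degree `d` and every block has
degree (rank) `Δ`. -/
def IsBipartiteDegRank {ν β : Type} (d Δ : ℕ) (adj : ν → β → Prop) : Prop :=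
  (∀ x : ν, Nat.card {b : β // adj x b} = d) ∧
  (∀ b : β, Nat.card {x : ν // adj x b} = Δ)

/-- The bipartite graph determined by `adj` has line-diameter `l`: the maximum,
over pairs of distinct blocks, of the distance between the two blocks is `l`. -/
def HasLineDiam {ν β : Type} (adj : ν → β → Prop) (l : ℕ) : Prop :=
  (∀ b b' : β, b ≠ b' → (bipGraph adj).dist (Sum.inr b) (Sum.inr b') ≤ l) ∧
  (∃ b b' : β, b ≠ b' ∧ (bipGraph adj).dist (Sum.inr b) (Sum.inr b') = l)

/-- `adjH` describes the bipartite graph `H` built by the 2-step method from the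
bipartite graph `H0` (given by `adj0`) and the `[Δ,k]`-transversal design `T`
(given by `groupT`, `adjT`): the nodes of `H` are the pairs `(p, j)` for `p` a node
of `H0` and `j : Fin k` (so the group `G_p` is `{p} × Fin k`), the blocks of `H`
are the pairs `(Q, b)` for `Q` a block of `H0` and `b` a block of `T` (so the set
`B_Q` is `{Q} × βT`, and such sets are automatically pairwise disjoint, as are the
edge sets of the copies `T_Q`), a node `(p, j)` is adjacent in `H` to a block
`(Q, b)` only if `p` is adjacent to `Q` in `H0`, and for every block `Q` of `H0`
the nodes of the groups `G_p`, for `p` a neighbour of `Q` in `H0`, together with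
the blocks of `B_Q` form a copy `T_Q` of `T` whose `Δ` groups are these groups. -/
structure TwoStep {ν0 β0 νT βT : Type} (Δ k : ℕ)
    (adj0 : ν0 → β0 → Prop) (groupT : νT → Fin Δ) (adjT : νT → βT → Prop)
    (adjH : ν0 × Fin k → β0 × βT → Prop) : Prop where
  td : IsTransversalDesign Δ k groupT adjT
  supp : ∀ (x : ν0 × Fin k) (Q : β0) (b : βT), adjH x (Q, b) → adj0 x.1 Q
  copy : ∀ Q : β0, ∃ (enum : Fin Δ → ν0) (f : νT ≃ {x : ν0 × Fin k // adj0 x.1 Q})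
      (g : βT ≃ βT),
    Function.Injective enum ∧ (∀ i : Fin Δ, adj0 (enum i) Q) ∧
    (∀ q : ν0, adj0 q Q → ∃ i : Fin Δ, enum i = q) ∧
    (∀ x : νT, ((f x : ν0 × Fin k).1 = enum (groupT x))) ∧
    (∀ (x : νT) (b : βT), adjT x b ↔ adjH (f x : ν0 × Fin k) (Q, g b))


/-!
Over every block `Q` of `H0` sits a transversal design, so two nodes of `H` lying over distinct
neighbours of `Q` share a block of `H` over `Q`. Hence a shortest path between blocks of `H0`,
with inner nodes `p₁, …, pₘ` (`m ≥ 2`), lifts to a path of `H` of the same length between any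
two blocks over its ends: start at a node over `p₁` on the first block, end at a node over `pₘ` on
the last one, and join consecutive nodes through generated blocks. When the two blocks of `H0`
are equal or share a node `p`, the same construction along `q, p` for some other neighbour `q`
of the first block gives a path of length `4 ≤ λ`. Conversely, projecting onto `H0` is a graph
homomorphism, so distances in `H` are at least those in `H0`.
-/

open SimpleGraph

section Bipartite

variable {ν β : Type} {adj : ν → β → Prop} {x y : ν} {b c : β}

@[simp]
lemma bipGraph_adj_inl_inr : (bipGraph adj).Adj (.inl x) (.inr b) ↔ adj x b := by
  simp [bipGraph]

@[simp]
lemma bipGraph_adj_inr_inl : (bipGraph adj).Adj (.inr b) (.inl x) ↔ adj x b := by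
  simp [bipGraph]

@[simp]
lemma bipGraph_not_adj_inl_inl : ¬(bipGraph adj).Adj (.inl x) (.inl y) := by
  simp [bipGraph]

@[simp]
lemma bipGraph_not_adj_inr_inr : ¬(bipGraph adj).Adj (.inr b) (.inr c) := by
  simp [bipGraph]

def bipGraphHom {ν' β' : Type} {adj' : ν' → β' → Prop} (f : ν → ν') (g : β → β')
    (hfg : ∀ x b, adj x b → adj' (f x) (g b)) : bipGraph adj →g bipGraph adj' where
  toFun := Sum.map f g
  map_rel' {u v} h := by
    rcases u with x | b <;> rcases v with y | c <;> simp_all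

lemma exists_eq_cons_of_inl {v : ν ⊕ β} {W : (bipGraph adj).Walk (.inl x) v} (hW : ¬W.Nil) :
    ∃ (b : β) (h : (bipGraph adj).Adj (.inl x) (.inr b)) (W' : (bipGraph adj).Walk (.inr b) v),
      W = .cons h W' := by
  obtain ⟨_ | b, h, W', rfl⟩ := Walk.not_nil_iff.mp hW
  · simp at h
  · exact ⟨b, h, W', rfl⟩

lemma exists_eq_cons_of_inr {v : ν ⊕ β} {W : (bipGraph adj).Walk (.inr b) v} (hW : ¬W.Nil) :
    ∃ (x : ν) (h : (bipGraph adj).Adj (.inr b) (.inl x)) (W' : (bipGraph adj).Walk (.inl x) v),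
      W = .cons h W' := by
  obtain ⟨x | _, h, W', rfl⟩ := Walk.not_nil_iff.mp hW
  · exact ⟨x, h, W', rfl⟩
  · simp at h

end Bipartite

lemma SimpleGraph.Hom.dist_map_le {V V' : Type} {G : SimpleGraph V} {G' : SimpleGraph V'}
    (f : G →g G') {u v : V} (h : G.Reachable u v) : G'.dist (f u) (f v) ≤ G.dist u v := by
  obtain ⟨W, hW⟩ := h.exists_walk_length_eq_dist
  exact hW ▸ W.length_map f ▸ dist_le (W.map f)

namespace TwoStep

variable {ν0 β0 νT βT : Type} {Δ k : ℕ} {adj0 : ν0 → β0 → Prop} {groupT : νT → Fin Δ}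
  {adjT : νT → βT → Prop} {adjH : ν0 × Fin k → β0 × βT → Prop}
  (h2 : TwoStep Δ k adj0 groupT adjT adjH)
include h2

lemma exists_adj0 (Q : β0) : ∃ p, adj0 p Q := by
  obtain ⟨enum, -, -, -, hadj, -⟩ := h2.copy Q
  exact ⟨enum ⟨0, by have := h2.td.two_le_Δ; omega⟩, hadj _⟩

lemma exists_ne_adj0 (Q : β0) (p : ν0) : ∃ q, q ≠ p ∧ adj0 q Q := by
  obtain ⟨enum, -, -, hinj, hadj, -⟩ := h2.copy Q
  have hΔ := h2.td.two_le_Δ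
  have hne : enum ⟨0, by omega⟩ ≠ enum ⟨1, by omega⟩ := fun h => by simpa using hinj h
  by_cases h : enum ⟨0, by omega⟩ = p
  · exact ⟨_, h ▸ hne.symm, hadj _⟩
  · exact ⟨_, h, hadj _⟩

lemma exists_adjH_of_adj0 {p : ν0} {Q : β0} (hp : adj0 p Q) (b : βT) :
    ∃ j, adjH (p, j) (Q, b) := by
  obtain ⟨enum, f, g, -, -, hsurj, hf, hadj⟩ := h2.copy Q
  obtain ⟨i, rfl⟩ := hsurj p hp
  obtain ⟨x, ⟨hx, hxb⟩, -⟩ := h2.td.blockMeets (g.symm b) i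
  have hfx : (f x : ν0 × Fin k) = (enum i, (f x : ν0 × Fin k).2) := Prod.ext (by rw [hf, hx]) rfl
  have := (hadj x (g.symm b)).mp hxb
  rw [g.apply_symm_apply, hfx] at this
  exact ⟨_, this⟩

lemma exists_common_adjH {p p' : ν0} {Q : β0} (hp : adj0 p Q) (hp' : adj0 p' Q) (hne : p ≠ p')
    (j j' : Fin k) : ∃ c, adjH (p, j) (Q, c) ∧ adjH (p', j') (Q, c) := by
  obtain ⟨enum, f, g, -, -, -, hf, hadj⟩ := h2.copy Q
  have hfx : (f (f.symm ⟨(p, j), hp⟩) : ν0 × Fin k) = (p, j) := by simp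
  have hfx' : (f (f.symm ⟨(p', j'), hp'⟩) : ν0 × Fin k) = (p', j') := by simp
  have hgroup : groupT (f.symm ⟨(p, j), hp⟩) ≠ groupT (f.symm ⟨(p', j'), hp'⟩) := fun h =>
    hne (by simpa [← hf] using congrArg enum h)
  obtain ⟨c, ⟨hc, hc'⟩, -⟩ := h2.td.pairGen _ _ hgroup
  exact ⟨g c, hfx ▸ (hadj _ c).mp hc, hfx' ▸ (hadj _ c).mp hc'⟩

lemma exists_walk_inl_inl {p p' : ν0} (W : (bipGraph adj0).Walk (.inl p) (.inl p'))
    (hW : W.IsPath) (hne : p ≠ p') (j j' : Fin k) :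
    ∃ W' : (bipGraph adjH).Walk (.inl (p, j)) (.inl (p', j')), W'.length = W.length := by
  induction hn : W.length using Nat.strong_induction_on generalizing p W j with
  | _ n ih =>
  obtain ⟨Q, hpQ, W₁, rfl⟩ := exists_eq_cons_of_inl (W.not_nil_of_ne (by simpa using hne))
  obtain ⟨p₁, hQp₁, W₂, rfl⟩ := exists_eq_cons_of_inr (W₁.not_nil_of_ne (by simp))
  rw [Walk.cons_isPath_iff, Walk.cons_isPath_iff, Walk.support_cons] at hW
  have hpp₁ : p ≠ p₁ := by rintro rfl; simp at hW
  obtain ⟨i, V, hV⟩ : ∃ i, ∃ V : (bipGraph adjH).Walk (.inl (p₁, i)) (.inl (p', j')),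
      V.length = W₂.length := by
    by_cases hp₁ : p₁ = p'
    · subst hp₁
      exact ⟨j', .nil, (Walk.length_eq_zero_iff.mpr (Walk.isPath_iff_nil.mp hW.1.1)).symm⟩
    · exact ⟨j, ih W₂.length (by simp [← hn]) W₂ hW.1.1 hp₁ j rfl⟩
  obtain ⟨c, hc, hc₁⟩ := h2.exists_common_adjH (by simpa using hpQ) (by simpa using hQp₁) hpp₁ j i
  exact ⟨.cons (bipGraph_adj_inl_inr.mpr hc) (.cons (bipGraph_adj_inr_inl.mpr hc₁) V),
    by simp [hV, ← hn]⟩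

lemma exists_walk_inr_inr_of_isPath {p p' : ν0} {Q Q' : β0} (hpQ : adj0 p Q) (hp'Q' : adj0 p' Q')
    (W : (bipGraph adj0).Walk (.inl p) (.inl p')) (hW : W.IsPath) (hne : p ≠ p') (b b' : βT) :
    ∃ W' : (bipGraph adjH).Walk (.inr (Q, b)) (.inr (Q', b')), W'.length = W.length + 2 := by
  obtain ⟨j, hj⟩ := h2.exists_adjH_of_adj0 hpQ b
  obtain ⟨j', hj'⟩ := h2.exists_adjH_of_adj0 hp'Q' b'
  obtain ⟨V, hV⟩ := h2.exists_walk_inl_inl W hW hne j j'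
  exact ⟨.cons (bipGraph_adj_inr_inl.mpr hj) (V.concat (bipGraph_adj_inl_inr.mpr hj')),
    by simp [hV]⟩

lemma exists_walk_inr_inr {Q Q' : β0} (hr : (bipGraph adj0).Reachable (.inr Q) (.inr Q'))
    (b b' : βT) : ∃ W' : (bipGraph adjH).Walk (.inr (Q, b)) (.inr (Q', b')),
      W'.length ≤ max ((bipGraph adj0).dist (.inr Q) (.inr Q')) 4 := by
  by_cases hcommon : ∃ p, adj0 p Q ∧ adj0 p Q'
  · obtain ⟨p, hpQ, hpQ'⟩ := hcommon
    obtain ⟨q, hqp, hqQ⟩ := h2.exists_ne_adj0 Q p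
    let W : (bipGraph adj0).Walk (.inl q) (.inl p) :=
      .cons (bipGraph_adj_inl_inr.mpr hqQ) (.cons (bipGraph_adj_inr_inl.mpr hpQ) .nil)
    obtain ⟨W', hW'⟩ :=
      h2.exists_walk_inr_inr_of_isPath hqQ hpQ' W (by simp [W, hqp]) hqp b b'
    exact ⟨W', by simp [hW', W]⟩
  push Not at hcommon
  obtain ⟨W, hW, hlen⟩ := hr.exists_path_of_dist
  have hQQ' : Q ≠ Q' := by
    rintro rfl
    obtain ⟨p, hp⟩ := h2.exists_adj0 Q
    exact hcommon p hp hp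
  obtain ⟨p, hQp, W₁, rfl⟩ := exists_eq_cons_of_inr (W.not_nil_of_ne (by simpa using hQQ'))
  obtain ⟨p', hQ'p', W₂, hW₁⟩ := exists_eq_cons_of_inr (W₁.reverse.not_nil_of_ne (by simp))
  have hW₂ : W₂.reverse.IsPath := by
    have := (Walk.cons_isPath_iff _ _).mp hW
    rw [← Walk.isPath_reverse_iff, hW₁, Walk.cons_isPath_iff] at this
    exact this.1.1.reverse
  have hpp' : p ≠ p' := by
    rintro rfl
    exact hcommon p (by simpa using hQp) (by simpa using hQ'p')
  obtain ⟨W', hW'⟩ := h2.exists_walk_inr_inr_of_isPath (by simpa using hQp) (by simpa using hQ'p')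
    W₂.reverse hW₂ hpp' b b'
  refine ⟨W', le_max_of_le_left ?_⟩
  have := congrArg Walk.length hW₁
  simp only [Walk.length_reverse, Walk.length_cons] at this
  simp [hW', ← hlen, this]

def proj : bipGraph adjH →g bipGraph adj0 :=
  bipGraphHom Prod.fst Prod.fst fun x B hxB => h2.supp x B.1 B.2 hxB

end TwoStep

theorem twoStep_lineDiameter_general {ν0 β0 νT βT : Type} (Δ k lam : ℕ)
    (adj0 : ν0 → β0 → Prop) (groupT : νT → Fin Δ) (adjT : νT → βT → Prop)
    (adjH : ν0 × Fin k → β0 × βT → Prop)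
    (h2 : TwoStep Δ k adj0 groupT adjT adjH)
    (hlam : 4 ≤ lam) (hld : HasLineDiam adj0 lam) :
    HasLineDiam adjH lam := by
  refine ⟨?_, ?_⟩
  · rintro ⟨Q, b⟩ ⟨Q', b'⟩ -
    by_cases hr : (bipGraph adj0).Reachable (.inr Q) (.inr Q')
    · have hdist : (bipGraph adj0).dist (.inr Q) (.inr Q') ≤ lam := by
        rcases eq_or_ne Q Q' with rfl | hQQ'
        · simp
        · exact hld.1 Q Q' hQQ'
      obtain ⟨W', hW'⟩ := h2.exists_walk_inr_inr hr b b'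
      exact (dist_le W').trans (hW'.trans (max_le hdist hlam))
    · rw [dist_eq_zero_of_not_reachable fun hrH => hr (hrH.map h2.proj)]
      exact Nat.zero_le lam
  · obtain ⟨Q, Q', hQQ', hdist⟩ := hld.2
    obtain ⟨b⟩ : Nonempty βT :=
      (Nat.card_ne_zero.mp (by rw [h2.td.blockCard]; have := h2.td.two_le_k; positivity)).1
    have hr : (bipGraph adj0).Reachable (.inr Q) (.inr Q') :=
      Reachable.of_dist_ne_zero (by omega)
    obtain ⟨W', hW'⟩ := h2.exists_walk_inr_inr hr b b
    refine ⟨(Q, b), (Q', b), by simp [hQQ'], le_antisymm ?_ ?_⟩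
    · exact (dist_le W').trans (hW'.trans (max_le hdist.le hlam))
    · exact hdist ▸ h2.proj.dist_map_le ⟨W'⟩

/-- If the `(dk,Δ)`-bipartite graph `H` (given by `adjH`) has been
constructed by the 2-step method from the connected `(d,Δ)`-bipartite graph `H0`
(given by `adj0`) and the `[Δ,k]`-transversal design `T`, and `H0` has line-diameter
`lam ≥ 4`, then `H` has line-diameter `lam`. -/
theorem twoStep_lineDiameter {ν0 β0 νT βT : Type} (d Δ k lam : ℕ)
    (adj0 : ν0 → β0 → Prop) (groupT : νT → Fin Δ) (adjT : νT → βT → Prop)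
    (adjH : ν0 × Fin k → β0 × βT → Prop)
    (hH0 : IsBipartiteDegRank d Δ adj0)
    (hconn : (bipGraph adj0).Connected)
    (h2 : TwoStep Δ k adj0 groupT adjT adjH)
    (hlam : 4 ≤ lam) (hld : HasLineDiam adj0 lam) :
    HasLineDiam adjH lam :=
  twoStep_lineDiameter_general Δ k lam adj0 groupT adjT adjH h2 hlam hld
end

section
/- Let H0 be a connected (d,Δ)-bipartite graph of line-diameter λ ≥ 4 with n nodes and e blocks, let T be a [Δ,k]-transversal design, and define H_0 = H0 and, for i ≥ 1, H_i to be the bipartite graph built by the 2-step method from H_{i-1} and T. Then for every i ≥ 1, H_i is a connected (dk^i,Δ)-bipartite graph of line-diameter λ with nk^i nodes and ek^{2i} blocks. -/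
/-- The node type of the `i`-th iterate of the 2-step method: at each iteration
each node is replaced by a group of `k` nodes. -/
def NType (ν0 : Type) (k : ℕ) : ℕ → Type :=
  fun i => Nat.rec ν0 (fun _ T => T × Fin k) i

/-- The block type of the `i`-th iterate of the 2-step method: at each iteration
each block is replaced by a set of blocks indexed by the blocks of `T`. -/
def BType (β0 βT : Type) : ℕ → Type :=
  fun i => Nat.rec β0 (fun _ T => T × βT) i

open SimpleGraph Sum

section bip
variable {ν β : Type} {adj : ν → β → Prop}

lemma bip_adj_iff {x : ν} {b : β} :
    (bipGraph adj).Adj (inl x) (inr b) ↔ adj x b := by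
  constructor
  · rintro ⟨hne, (⟨x', b', hx, hb, h⟩ | ⟨x', b', hx, hb, h⟩)⟩
    · cases hx; cases hb; exact h
    · exact absurd hb (by simp)
  · intro h
    exact ⟨by simp, Or.inl ⟨x, b, rfl, rfl, h⟩⟩

lemma bip_adj_iff' {x : ν} {b : β} :
    (bipGraph adj).Adj (inr b) (inl x) ↔ adj x b := by
  rw [SimpleGraph.adj_comm]; exact bip_adj_iff

lemma bip_adj_of_inl {x : ν} {v : ν ⊕ β} (h : (bipGraph adj).Adj (inl x) v) :
    ∃ b, v = inr b ∧ adj x b := by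
  rcases v with y | b
  · rcases h with ⟨hne, (⟨x', b', hx, hb, _⟩ | ⟨x', b', hx, hb, _⟩)⟩ <;> simp_all
  · exact ⟨b, rfl, bip_adj_iff.1 h⟩

lemma bip_adj_of_inr {b : β} {v : ν ⊕ β} (h : (bipGraph adj).Adj (inr b) v) :
    ∃ x, v = inl x ∧ adj x b := by
  rcases v with x | b'
  · exact ⟨x, rfl, bip_adj_iff'.1 h⟩
  · rcases h with ⟨hne, (⟨x', b', hx, hb, _⟩ | ⟨x', b', hx, hb, _⟩)⟩ <;> simp_all

end bip

section td
variable {νT βT : Type} {Δ k : ℕ} {groupT : νT → Fin Δ} {adjT : νT → βT → Prop}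
variable (hT : IsTransversalDesign Δ k groupT adjT)
include hT

lemma td_betaT_nonempty : Nonempty βT := by
  have h := hT.blockCard
  have hk := hT.two_le_k
  have : 0 < Nat.card βT := by rw [h]; positivity
  exact (Nat.card_pos_iff.1 this).1

lemma td_group_nonempty (i : Fin Δ) : ∃ x : νT, groupT x = i := by
  have h := hT.groupCard i
  have hk := hT.two_le_k
  have : 0 < Nat.card {x : νT // groupT x = i} := by omega
  obtain ⟨⟨x, hx⟩⟩ := (Nat.card_pos_iff.1 this).1
  exact ⟨x, hx⟩

lemma td_block_rank (b : βT) : Nat.card {x : νT // adjT x b} = Δ := by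
  have hbij : Function.Bijective (fun x : {x : νT // adjT x b} => groupT x.1) := by
    constructor
    · rintro ⟨x, hx⟩ ⟨y, hy⟩ h
      obtain ⟨z, hz, huniq⟩ := hT.blockMeets b (groupT x)
      have hx' : x = z := huniq x ⟨rfl, hx⟩
      have hy' : y = z := huniq y ⟨(h.symm : groupT y = groupT x), hy⟩
      simp [hx', hy']
    · intro i
      obtain ⟨z, ⟨hz1, hz2⟩, _⟩ := hT.blockMeets b i
      exact ⟨⟨z, hz2⟩, hz1⟩
  rw [Nat.card_congr (Equiv.ofBijective _ hbij), Nat.card_eq_fintype_card, Fintype.card_fin]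

lemma td_ne_group (i : Fin Δ) : ∃ j : Fin Δ, j ≠ i := by
  have h2 : 2 ≤ Δ := hT.two_le_Δ
  by_cases h : i = ⟨0, by omega⟩
  · exact ⟨⟨1, by omega⟩, by simp [h, Fin.ext_iff]⟩
  · exact ⟨⟨0, by omega⟩, fun hc => h hc.symm⟩

lemma td_node_degree (x : νT) : Nat.card {b : βT // adjT x b} = k := by
  obtain ⟨i', hi'⟩ := td_ne_group hT (groupT x)
  have hgx : ∀ b, ∃! y : νT, groupT y = i' ∧ adjT y b := fun b => hT.blockMeets b i'
  set F : {b : βT // adjT x b} → {y : νT // groupT y = i'} :=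
    fun b => ⟨(hgx b.1).exists.choose, (hgx b.1).exists.choose_spec.1⟩ with hF
  have hbij : Function.Bijective F := by
    constructor
    · rintro ⟨b, hb⟩ ⟨c, hc⟩ h
      have h1 := (hgx b).exists.choose_spec
      have h2 := (hgx c).exists.choose_spec
      have heq : (hgx b).exists.choose = (hgx c).exists.choose := congrArg Subtype.val h
      have hgne : groupT x ≠ groupT (hgx b).exists.choose := by
        rw [h1.1]; exact fun hc => hi' hc.symm
      obtain ⟨b0, hb0, hbu⟩ := hT.pairGen x _ hgne
      have : b = b0 := hbu b ⟨hb, h1.2⟩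
      have : c = b0 := by
        apply hbu c; exact ⟨hc, heq ▸ h2.2⟩
      simp_all
    · rintro ⟨y, hy⟩
      have hgne : groupT x ≠ groupT y := by rw [hy]; exact fun hc => hi' hc.symm
      obtain ⟨b0, ⟨hb1, hb2⟩, _⟩ := hT.pairGen x y hgne
      refine ⟨⟨b0, hb1⟩, ?_⟩
      have h1 := (hgx b0).exists.choose_spec
      obtain ⟨z, hz, huniq⟩ := hgx b0
      have e1 : (hgx b0).exists.choose = z := huniq _ h1
      have e2 : y = z := huniq _ ⟨hy, hb2⟩
      apply Subtype.ext
      simp [hF, e1, e2]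
  rw [Nat.card_congr (Equiv.ofBijective _ hbij), hT.groupCard i']

end td

section step
variable {νA βA νT βT : Type} {Δ k : ℕ}
  {adjA : νA → βA → Prop} {groupT : νT → Fin Δ} {adjT : νT → βT → Prop}
  {adjB : νA × Fin k → βA × βT → Prop}
  (hs : TwoStep Δ k adjA groupT adjT adjB)

include hs

/-- L1: every block of `B_Q` is adjacent to a node over each neighbour `p` of `Q`. -/
lemma step_L1 (Q : βA) (b : βT) (p : νA) (hp : adjA p Q) :
    ∃ j : Fin k, adjB (p, j) (Q, b) := by
  obtain ⟨enum, f, g, _, _, hsur, hfst, hiff⟩ := hs.copy Q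
  obtain ⟨i, hi⟩ := hsur p hp
  obtain ⟨x, ⟨hx1, hx2⟩, -⟩ := hs.td.blockMeets (g.symm b) i
  have hadj : adjB (f x : νA × Fin k) (Q, b) := by
    have := (hiff x (g.symm b)).1 hx2
    rwa [g.apply_symm_apply] at this
  refine ⟨(f x : νA × Fin k).2, ?_⟩
  have hfx : ((f x : νA × Fin k) : νA × Fin k) = (p, (f x : νA × Fin k).2) := by
    ext
    · rw [hfst x, hx1, hi]
    · rfl
  rwa [hfx] at hadj

/-- L2: two nodes over distinct neighbours of `Q` have a common block in `B_Q`. -/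
lemma step_L2 (Q : βA) (p p' : νA) (hp : adjA p Q) (hp' : adjA p' Q) (hne : p ≠ p')
    (j j' : Fin k) : ∃ b : βT, adjB (p, j) (Q, b) ∧ adjB (p', j') (Q, b) := by
  obtain ⟨enum, f, g, _, _, _, hfst, hiff⟩ := hs.copy Q
  set x := f.symm ⟨(p, j), hp⟩ with hx
  set y := f.symm ⟨(p', j'), hp'⟩ with hy
  have hxv : (f x : νA × Fin k) = (p, j) := by rw [hx, f.apply_symm_apply]
  have hyv : (f y : νA × Fin k) = (p', j') := by rw [hy, f.apply_symm_apply]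
  have hgne : groupT x ≠ groupT y := by
    intro h
    apply hne
    have h1 := hfst x
    have h2 := hfst y
    rw [hxv] at h1; rw [hyv] at h2
    simp only at h1 h2
    rw [h1, h2, h]
  obtain ⟨c, ⟨hc1, hc2⟩, -⟩ := hs.td.pairGen x y hgne
  refine ⟨g c, ?_, ?_⟩
  · have := (hiff x c).1 hc1; rwa [hxv] at this
  · have := (hiff y c).1 hc2; rwa [hyv] at this

/-- L3: from a node over a neighbour of `Q` to any block of `B_Q` there is a walk
of length at most 3. -/
lemma step_L3 (Q : βA) (b : βT) (p : νA) (hp : adjA p Q) (j : Fin k) :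
    ∃ w : (bipGraph adjB).Walk (inl (p, j)) (inr (Q, b)), w.length ≤ 3 := by
  obtain ⟨enum, f, g, _, _, _, hfst, hiff⟩ := hs.copy Q
  set x := f.symm ⟨(p, j), hp⟩ with hx
  have hxv : (f x : νA × Fin k) = (p, j) := by rw [hx, f.apply_symm_apply]
  obtain ⟨i', hi'⟩ := td_ne_group hs.td (groupT x)
  obtain ⟨y, ⟨hy1, hy2⟩, -⟩ := hs.td.blockMeets (g.symm b) i'
  have hgne : groupT x ≠ groupT y := by rw [hy1]; exact fun h => hi' h.symm
  obtain ⟨c, ⟨hc1, hc2⟩, -⟩ := hs.td.pairGen x y hgne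
  have e1 : adjB (p, j) (Q, g c) := by have := (hiff x c).1 hc1; rwa [hxv] at this
  have e2 : adjB (f y : νA × Fin k) (Q, g c) := (hiff y c).1 hc2
  have e3 : adjB (f y : νA × Fin k) (Q, b) := by
    have := (hiff y (g.symm b)).1 hy2
    rwa [g.apply_symm_apply] at this
  exact ⟨Walk.cons (bip_adj_iff.2 e1)
    (Walk.cons (bip_adj_iff'.2 e2)
      (Walk.cons (bip_adj_iff.2 e3) Walk.nil)), by simp⟩

end step

section helpers
variable {V : Type} {G : SimpleGraph V}

lemma walk_destruct {u v : V} (w : G.Walk u v) (h : u ≠ v) :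
    ∃ (x : V) (ha : G.Adj u x) (w' : G.Walk x v), w = SimpleGraph.Walk.cons ha w' := by
  cases w with
  | nil => exact absurd rfl h
  | cons ha w' => exact ⟨_, ha, w', rfl⟩

lemma exists_ne_of_card {α : Type} {m : ℕ} (h : Nat.card α = m) (hm : 2 ≤ m) (a : α) :
    ∃ b : α, b ≠ a := by
  have hpos : 0 < Nat.card α := by omega
  have hfin : Finite α := (Nat.card_pos_iff.1 hpos).2
  have : Nontrivial α := Finite.one_lt_card_iff_nontrivial.1 (by omega)
  exact exists_ne a

end helpers

section bip2
variable {ν β : Type} {adj : ν → β → Prop}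

lemma node_has_block (hconn : (bipGraph adj).Connected) (hβ : Nonempty β) (p : ν) :
    ∃ Q, adj p Q := by
  obtain ⟨Q0⟩ := hβ
  obtain ⟨w⟩ := hconn (inl p) (inr Q0)
  obtain ⟨x, ha, w', -⟩ := walk_destruct w (by simp)
  obtain ⟨b, -, hb⟩ := bip_adj_of_inl ha
  exact ⟨b, hb⟩

lemma block_has_node {Δ : ℕ} (hΔ : 2 ≤ Δ)
    (hrank : ∀ b : β, Nat.card {x : ν // adj x b} = Δ) (Q : β) : ∃ p, adj p Q := by
  have : 0 < Nat.card {x : ν // adj x Q} := by rw [hrank Q]; omega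
  obtain ⟨⟨p, hp⟩⟩ := (Nat.card_pos_iff.1 this).1
  exact ⟨p, hp⟩

lemma block_has_two_nodes {Δ : ℕ} (hΔ : 2 ≤ Δ)
    (hrank : ∀ b : β, Nat.card {x : ν // adj x b} = Δ) (Q : β) (p : ν) :
    ∃ p', adj p' Q ∧ p' ≠ p := by
  by_cases hp : adj p Q
  · obtain ⟨⟨p', hp'⟩, hne⟩ := exists_ne_of_card (hrank Q) hΔ ⟨p, hp⟩
    exact ⟨p', hp', fun h => hne (Subtype.ext h)⟩
  · obtain ⟨p', hp'⟩ := block_has_node hΔ hrank Q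
    exact ⟨p', hp', fun h => hp (h ▸ hp')⟩

end bip2

section step2
variable {νA βA νT βT : Type} {Δ k : ℕ}
  {adjA : νA → βA → Prop} {groupT : νT → Fin Δ} {adjT : νT → βT → Prop}
  {adjB : νA × Fin k → βA × βT → Prop}
  (hs : TwoStep Δ k adjA groupT adjT adjB)
  (hrankA : ∀ Q : βA, Nat.card {x : νA // adjA x Q} = Δ)

include hs hrankA

/-- nodes over two (possibly equal) neighbours of a block are reachable. -/
lemma step_r_nn (Q : βA) (p p' : νA) (hp : adjA p Q) (hp' : adjA p' Q)
    (j j' : Fin k) : (bipGraph adjB).Reachable (inl (p, j)) (inl (p', j')) := by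
  by_cases hne : p = p'
  · subst hne
    by_cases hj : j = j'
    · subst hj; exact SimpleGraph.Reachable.refl _
    · obtain ⟨p'', hp'', hne''⟩ := block_has_two_nodes hs.td.two_le_Δ hrankA Q p
      obtain ⟨b1, hb11, hb12⟩ :=
        step_L2 hs Q p p'' hp hp'' (fun h => hne'' h.symm) j (⟨0, by have := hs.td.two_le_k; omega⟩)
      obtain ⟨b2, hb21, hb22⟩ :=
        step_L2 hs Q p'' p hp'' hp hne'' (⟨0, by have := hs.td.two_le_k; omega⟩) j'
      exact ((((bip_adj_iff.2 hb11).reachable).trans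
        ((bip_adj_iff'.2 hb12).reachable)).trans
        ((bip_adj_iff.2 hb21).reachable)).trans ((bip_adj_iff'.2 hb22).reachable)
  · obtain ⟨b, hb1, hb2⟩ := step_L2 hs Q p p' hp hp' hne j j'
    exact ((bip_adj_iff.2 hb1).reachable).trans ((bip_adj_iff'.2 hb2).reachable)

lemma step_r_bn (Q : βA) (b : βT) (p : νA) (hp : adjA p Q) (j : Fin k) :
    (bipGraph adjB).Reachable (inr (Q, b)) (inl (p, j)) := by
  obtain ⟨j0, hj0⟩ := step_L1 hs Q b p hp
  exact ((bip_adj_iff'.2 hj0).reachable).trans (step_r_nn hs hrankA Q p p hp hp j0 j)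

lemma step_r_bb (Q : βA) (b b' : βT) :
    (bipGraph adjB).Reachable (inr (Q, b)) (inr (Q, b')) := by
  obtain ⟨p, hp⟩ := block_has_node hs.td.two_le_Δ hrankA Q
  have hk := hs.td.two_le_k
  exact (step_r_bn hs hrankA Q b p hp ⟨0, by omega⟩).trans
    (step_r_bn hs hrankA Q b' p hp ⟨0, by omega⟩).symm

lemma step_connected (hconnA : (bipGraph adjA).Connected) (hβA : Nonempty βA) :
    (bipGraph adjB).Connected := by
  have hk := hs.td.two_le_k
  have hbT : Nonempty βT := td_betaT_nonempty hs.td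
  obtain ⟨b0⟩ := hbT
  set j0 : Fin k := ⟨0, by omega⟩ with hj0
  set σ : (νA ⊕ βA) → ((νA × Fin k) ⊕ (βA × βT)) :=
    fun u => match u with
    | inl p => inl (p, j0)
    | inr Q => inr (Q, b0) with hσ
  have hadjstep : ∀ u v : νA ⊕ βA, (bipGraph adjA).Adj u v →
      (bipGraph adjB).Reachable (σ u) (σ v) := by
    intro u v h
    rcases u with p | Q
    · obtain ⟨Q, rfl, hQ⟩ := bip_adj_of_inl h
      exact (step_r_bn hs hrankA Q b0 p hQ j0).symm
    · obtain ⟨p, rfl, hp⟩ := bip_adj_of_inr h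
      exact step_r_bn hs hrankA Q b0 p hp j0
  have hreachstep : ∀ u v : νA ⊕ βA, (bipGraph adjA).Reachable u v →
      (bipGraph adjB).Reachable (σ u) (σ v) := by
    intro u v h
    obtain ⟨w⟩ := h
    induction w with
    | nil => exact SimpleGraph.Reachable.refl _
    | cons h w ih => exact (hadjstep _ _ h).trans ih
  have hproj : ∀ w : (νA × Fin k) ⊕ (βA × βT),
      ∃ u : νA ⊕ βA, (bipGraph adjB).Reachable w (σ u) := by
    intro w
    rcases w with ⟨p, j⟩ | ⟨Q, b⟩
    · obtain ⟨Q, hQ⟩ := node_has_block hconnA hβA p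
      exact ⟨inl p, step_r_nn hs hrankA Q p p hQ hQ j j0⟩
    · exact ⟨inr Q, step_r_bb hs hrankA Q b b0⟩
  rw [SimpleGraph.connected_iff]
  refine ⟨fun u v => ?_, by obtain ⟨Q0⟩ := hβA; exact ⟨inr (Q0, b0)⟩⟩
  obtain ⟨u0, hu0⟩ := hproj u
  obtain ⟨v0, hv0⟩ := hproj v
  exact (hu0.trans (hreachstep u0 v0 (hconnA u0 v0))).trans hv0.symm

end step2

section step3
variable {νA βA νT βT : Type} {Δ k : ℕ}
  {adjA : νA → βA → Prop} {groupT : νT → Fin Δ} {adjT : νT → βT → Prop}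
  {adjB : νA × Fin k → βA × βT → Prop}

lemma step_adjB_iff (Q : βA) (f : νT ≃ {x : νA × Fin k // adjA x.1 Q}) (g : βT ≃ βT)
    (hiff : ∀ (x : νT) (b : βT), adjT x b ↔ adjB (f x : νA × Fin k) (Q, g b))
    (x : νA × Fin k) (hx : adjA x.1 Q) (b : βT) :
    adjB x (Q, b) ↔ adjT (f.symm ⟨x, hx⟩) (g.symm b) := by
  have h := hiff (f.symm ⟨x, hx⟩) (g.symm b)
  rw [f.apply_symm_apply, g.apply_symm_apply] at h
  exact h.symm

variable (hs : TwoStep Δ k adjA groupT adjT adjB)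
include hs

lemma step_node_degree {D : ℕ} (hdegA : ∀ p : νA, Nat.card {Q : βA // adjA p Q} = D)
    (x : νA × Fin k) : Nat.card {Qb : βA × βT // adjB x Qb} = D * k := by
  have hk := hs.td.two_le_k
  have e1 : {Qb : βA × βT // adjB x Qb} ≃
      Σ Q : {Q : βA // adjA x.1 Q}, {b : βT // adjB x (Q.1, b)} :=
    { toFun := fun z => ⟨⟨z.1.1, hs.supp x z.1.1 z.1.2 z.2⟩, ⟨z.1.2, z.2⟩⟩
      invFun := fun w => ⟨(w.1.1, w.2.1), w.2.2⟩
      left_inv := fun z => rfl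
      right_inv := fun w => rfl }
  have hfib : ∀ Q : {Q : βA // adjA x.1 Q}, Nat.card {b : βT // adjB x (Q.1, b)} = k := by
    intro ⟨Q, hQ⟩
    obtain ⟨enum, f, g, _, _, _, hfst, hiff⟩ := hs.copy Q
    have e2 : {b : βT // adjB x (Q, b)} ≃ {c : βT // adjT (f.symm ⟨x, hQ⟩) c} :=
      { toFun := fun z => ⟨g.symm z.1, (step_adjB_iff Q f g hiff x hQ z.1).1 z.2⟩
        invFun := fun c => ⟨g c.1, (step_adjB_iff Q f g hiff x hQ (g c.1)).2
          (by rw [g.symm_apply_apply]; exact c.2)⟩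
        left_inv := fun z => by apply Subtype.ext; simp
        right_inv := fun c => by apply Subtype.ext; simp }
    rw [Nat.card_congr e2, td_node_degree hs.td]
  have hfin : ∀ Q : {Q : βA // adjA x.1 Q}, Finite {b : βT // adjB x (Q.1, b)} := by
    intro Q
    have : 0 < Nat.card {b : βT // adjB x (Q.1, b)} := by rw [hfib Q]; omega
    exact (Nat.card_pos_iff.1 this).2
  have e3 : {Qb : βA × βT // adjB x Qb} ≃ {Q : βA // adjA x.1 Q} × Fin k :=
    (e1.trans (Equiv.sigmaCongrRight fun Q =>
      @Finite.equivFinOfCardEq _ (hfin Q) _ (hfib Q))).trans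
      (Equiv.sigmaEquivProd _ _)
  rw [Nat.card_congr e3, Nat.card_prod, hdegA x.1, Nat.card_eq_fintype_card, Fintype.card_fin]

lemma step_block_rank (Qb : βA × βT) :
    Nat.card {x : νA × Fin k // adjB x Qb} = Δ := by
  obtain ⟨Q, b⟩ := Qb
  obtain ⟨enum, f, g, _, _, _, hfst, hiff⟩ := hs.copy Q
  have e : {x : νA × Fin k // adjB x (Q, b)} ≃ {y : νT // adjT y (g.symm b)} :=
    { toFun := fun z => ⟨f.symm ⟨z.1, hs.supp z.1 Q b z.2⟩,
        (step_adjB_iff Q f g hiff z.1 (hs.supp z.1 Q b z.2) b).1 z.2⟩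
      invFun := fun y => ⟨(f y.1 : νA × Fin k), by
        have h := (hiff y.1 (g.symm b)).1 y.2
        rwa [g.apply_symm_apply] at h⟩
      left_inv := fun z => by apply Subtype.ext; simp
      right_inv := fun y => by
        apply Subtype.ext
        show f.symm ⟨(f y.1 : νA × Fin k), _⟩ = y.1
        rw [Subtype.coe_eta, f.symm_apply_apply] }
  rw [Nat.card_congr e, td_block_rank hs.td]

end step3

section step4
variable {νA βA νT βT : Type} {Δ k : ℕ}
  {adjA : νA → βA → Prop} {groupT : νT → Fin Δ} {adjT : νT → βT → Prop}
  {adjB : νA × Fin k → βA × βT → Prop}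
  (hs : TwoStep Δ k adjA groupT adjT adjB)

include hs

lemma step_dist_lower (u v : (νA × Fin k) ⊕ (βA × βT))
    (hr : (bipGraph adjB).Reachable u v) :
    (bipGraph adjA).dist (Sum.map Prod.fst Prod.fst u) (Sum.map Prod.fst Prod.fst v) ≤
      (bipGraph adjB).dist u v := by
  have hπ : ∀ a b, (bipGraph adjB).Adj a b →
      (bipGraph adjA).Adj (Sum.map Prod.fst Prod.fst a) (Sum.map Prod.fst Prod.fst b) := by
    intro a b h
    rcases a with x | Qb <;> rcases b with x' | Qb'
    · obtain ⟨bb, hbb, -⟩ := bip_adj_of_inl h; simp at hbb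
    · have h' := bip_adj_iff.1 h
      have := hs.supp x Qb'.1 Qb'.2 h'
      exact bip_adj_iff.2 this
    · have h' := bip_adj_iff'.1 h
      have := hs.supp x' Qb.1 Qb.2 h'
      exact bip_adj_iff'.2 this
    · obtain ⟨bb, hbb, -⟩ := bip_adj_of_inr h; simp at hbb
  obtain ⟨w, -, hwl⟩ := hr.exists_path_of_dist
  have hd := SimpleGraph.dist_le
    (w.map ⟨Sum.map Prod.fst Prod.fst, fun {a b} h => hπ a b h⟩)
  rwa [SimpleGraph.Walk.length_map, hwl] at hd

lemma step_walkG : ∀ n : ℕ, ∀ (u : νA ⊕ βA) (p' : νA)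
    (w : (bipGraph adjA).Walk u (inl p')), w.IsPath → w.length = n →
    (∀ p : νA, u = inl p → p ≠ p' → ∀ j j' : Fin k,
      ∃ wB : (bipGraph adjB).Walk (inl (p, j)) (inl (p', j')), wB.length ≤ n) ∧
    (∀ Q : βA, u = inr Q → ∀ p : νA, adjA p Q → (inl p ∉ w.support) → ∀ j j' : Fin k,
      ∃ wB : (bipGraph adjB).Walk (inl (p, j)) (inl (p', j')), wB.length ≤ n + 1) := by
  have hk := hs.td.two_le_k
  intro n
  induction n using Nat.strong_induction_on with
  | _ n ih =>
    intro u p' w hw hn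
    constructor
    · rintro p rfl hne j j'
      obtain ⟨v1, ha1, w1, he1⟩ := walk_destruct w (by simp [hne])
      obtain ⟨Q, rfl, hQ⟩ := bip_adj_of_inl ha1
      have hn1 : w1.length + 1 = n := by rw [← hn, he1, SimpleGraph.Walk.length_cons]
      have hw1 : w1.IsPath ∧ inl p ∉ w1.support := by
        rw [he1, SimpleGraph.Walk.cons_isPath_iff] at hw; exact hw
      obtain ⟨wB, hwB⟩ := ((ih w1.length (by omega) (inr Q) p' w1 hw1.1 rfl).2)
        Q rfl p hQ hw1.2 j j'
      exact ⟨wB, by omega⟩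
    · rintro Q rfl p hpQ hsup j j'
      obtain ⟨v1, ha1, w1, he1⟩ := walk_destruct w (by simp)
      obtain ⟨p2, rfl, hp2⟩ := bip_adj_of_inr ha1
      have hn1 : w1.length + 1 = n := by rw [← hn, he1, SimpleGraph.Walk.length_cons]
      have hw1 : w1.IsPath := by
        rw [he1, SimpleGraph.Walk.cons_isPath_iff] at hw; exact hw.1
      have hpp2 : p ≠ p2 := by
        rintro rfl
        apply hsup
        rw [he1, SimpleGraph.Walk.support_cons]
        exact List.mem_cons_of_mem _ w1.start_mem_support
      by_cases hh : p2 = p'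
      · subst hh
        obtain ⟨b1, hb1, hb2⟩ := step_L2 hs Q p p2 hpQ hp2 hpp2 j j'
        exact ⟨SimpleGraph.Walk.cons (bip_adj_iff.2 hb1)
          (SimpleGraph.Walk.cons (bip_adj_iff'.2 hb2) SimpleGraph.Walk.nil), by simp; omega⟩
      · obtain ⟨b1, hb1, hb2⟩ := step_L2 hs Q p p2 hpQ hp2 hpp2 j ⟨0, by omega⟩
        obtain ⟨wB, hwB⟩ := ((ih w1.length (by omega) (inl p2) p' w1 hw1 rfl).1)
          p2 rfl hh ⟨0, by omega⟩ j'
        refine ⟨SimpleGraph.Walk.cons (bip_adj_iff.2 hb1)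
          (SimpleGraph.Walk.cons (bip_adj_iff'.2 hb2) wB), ?_⟩
        simp only [SimpleGraph.Walk.length_cons]
        omega

lemma step_dist_upper (hrankA : ∀ Q : βA, Nat.card {x : νA // adjA x Q} = Δ)
    (hconnA : (bipGraph adjA).Connected) (Q Q' : βA) (b b' : βT) :
    (bipGraph adjB).dist (inr (Q, b)) (inr (Q', b')) ≤
      max ((bipGraph adjA).dist (inr Q) (inr Q')) 4 := by
  by_cases hQ : Q = Q'
  · subst hQ
    obtain ⟨p, hp⟩ := block_has_node hs.td.two_le_Δ hrankA Q
    obtain ⟨j1, hj1⟩ := step_L1 hs Q b p hp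
    obtain ⟨w3, hw3⟩ := step_L3 hs Q b' p hp j1
    have hd := SimpleGraph.dist_le (SimpleGraph.Walk.cons (bip_adj_iff'.2 hj1) w3)
    rw [SimpleGraph.Walk.length_cons] at hd
    exact le_trans hd (le_trans (by omega) (le_max_right _ _))
  · obtain ⟨w, hwp, hwl⟩ := SimpleGraph.Connected.exists_path_of_dist hconnA (inr Q) (inr Q')
    obtain ⟨v1, ha1, w1, he1⟩ := walk_destruct w (by simp [hQ])
    obtain ⟨p1, rfl, hp1⟩ := bip_adj_of_inr ha1
    obtain ⟨v2, ha2, w2, he2⟩ := walk_destruct w1.reverse (by simp)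
    obtain ⟨pm, rfl, hpm⟩ := bip_adj_of_inr ha2
    obtain ⟨j1, hj1⟩ := step_L1 hs Q b p1 hp1
    obtain ⟨jm, hjm⟩ := step_L1 hs Q' b' pm hpm
    have hlen1 : w.length = w1.length + 1 := by rw [he1, SimpleGraph.Walk.length_cons]
    have hlen2 : w1.length = w2.length + 1 := by
      rw [← SimpleGraph.Walk.length_reverse w1, he2, SimpleGraph.Walk.length_cons]
    by_cases hpp : p1 = pm
    · subst hpp
      obtain ⟨w3, hw3⟩ := step_L3 hs Q' b' p1 hpm j1
      have hd := SimpleGraph.dist_le (SimpleGraph.Walk.cons (bip_adj_iff'.2 hj1) w3)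
      rw [SimpleGraph.Walk.length_cons] at hd
      exact le_trans hd (le_trans (by omega) (le_max_right _ _))
    · have hw1 : w1.IsPath := by
        rw [he1, SimpleGraph.Walk.cons_isPath_iff] at hwp; exact hwp.1
      have hw2 : w2.IsPath := by
        have := hw1.reverse
        rw [he2, SimpleGraph.Walk.cons_isPath_iff] at this
        exact this.1
      obtain ⟨wB, hwB⟩ := ((step_walkG hs w2.reverse.length (inl p1) pm w2.reverse
        hw2.reverse rfl).1) p1 rfl hpp j1 jm
      have hd := SimpleGraph.dist_le (SimpleGraph.Walk.cons (bip_adj_iff'.2 hj1)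
        (wB.concat (bip_adj_iff.2 hjm)))
      rw [SimpleGraph.Walk.length_cons, SimpleGraph.Walk.length_concat] at hd
      rw [SimpleGraph.Walk.length_reverse] at hwB
      refine le_trans hd (le_trans ?_ (le_max_left _ _))
      omega

end step4


section stepall
variable {νA βA νT βT : Type} {Δ k : ℕ}
  {adjA : νA → βA → Prop} {groupT : νT → Fin Δ} {adjT : νT → βT → Prop}
  {adjB : νA × Fin k → βA × βT → Prop}

lemma step_all {D lam N E : ℕ} (hs : TwoStep Δ k adjA groupT adjT adjB)
    (hA : IsBipartiteDegRank D Δ adjA) (hconnA : (bipGraph adjA).Connected)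
    (hlam : 4 ≤ lam) (hldA : HasLineDiam adjA lam)
    (hN : Nat.card νA = N) (hE : Nat.card βA = E) :
    (bipGraph adjB).Connected ∧ IsBipartiteDegRank (D * k) Δ adjB ∧
      HasLineDiam adjB lam ∧ Nat.card (νA × Fin k) = N * k ∧
      Nat.card (βA × βT) = E * k ^ 2 := by
  have hβA : Nonempty βA := by obtain ⟨b, -, -⟩ := hldA.2; exact ⟨b⟩
  have hconnB := step_connected hs hA.2 hconnA hβA
  refine ⟨hconnB, ⟨step_node_degree hs hA.1, step_block_rank hs⟩, ⟨?_, ?_⟩, ?_, ?_⟩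
  · rintro ⟨Q, b⟩ ⟨Q', b'⟩ hne
    have h4 : (bipGraph adjA).dist (inr Q) (inr Q') ≤ lam := by
      by_cases hQ : Q = Q'
      · subst hQ
        rw [SimpleGraph.dist_self]
        omega
      · exact hldA.1 Q Q' hQ
    exact le_trans (step_dist_upper hs hA.2 hconnA Q Q' b b') (max_le h4 hlam)
  · obtain ⟨Q, Q', hQne, hQd⟩ := hldA.2
    obtain ⟨b0⟩ := td_betaT_nonempty hs.td
    refine ⟨(Q, b0), (Q', b0), fun h => hQne (congrArg Prod.fst h), le_antisymm ?_ ?_⟩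
    · refine le_trans (step_dist_upper hs hA.2 hconnA Q Q' b0 b0) ?_
      rw [hQd]
      omega
    · have := step_dist_lower hs (inr (Q, b0)) (inr (Q', b0))
        (hconnB (inr (Q, b0)) (inr (Q', b0)))
      simpa [hQd] using this
  · rw [Nat.card_prod, hN, Nat.card_eq_fintype_card, Fintype.card_fin]
  · rw [Nat.card_prod, hE, hs.td.blockCard]

end stepall

/-- Let `H0` be a connected `(d,Δ)`-bipartite graph of line-diameter
`lam ≥ 4` with `n` nodes and `e` blocks, let `T` be a `[Δ,k]`-transversal design,
and let `H_0 = H0` and, for `i ≥ 1`, `H_i` be built by the 2-step method from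
`H_{i-1}` and `T` (the adjacency of `H_i` being `adjSeq i`).  Then for every
`i ≥ 1`, `H_i` is a connected `(d * k ^ i, Δ)`-bipartite graph of line-diameter
`lam` with `n * k ^ i` nodes and `e * k ^ (2 * i)` blocks. -/
theorem twoStep_iterate {ν0 β0 νT βT : Type} (d Δ k lam n e : ℕ)
    (adj0 : ν0 → β0 → Prop) (groupT : νT → Fin Δ) (adjT : νT → βT → Prop)
    (hH0 : IsBipartiteDegRank d Δ adj0)
    (hconn : (bipGraph adj0).Connected)
    (hlam : 4 ≤ lam) (hld : HasLineDiam adj0 lam)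
    (hn : Nat.card ν0 = n) (he : Nat.card β0 = e)
    (hT : IsTransversalDesign Δ k groupT adjT)
    (adjSeq : ∀ i : ℕ, NType ν0 k i → BType β0 βT i → Prop)
    (h0 : ∀ (x : ν0) (b : β0), adjSeq 0 x b ↔ adj0 x b)
    (hstep : ∀ i : ℕ, TwoStep Δ k (adjSeq i) groupT adjT (adjSeq (i + 1))) :
    ∀ i : ℕ, 1 ≤ i →
      (bipGraph (adjSeq i)).Connected ∧
      IsBipartiteDegRank (d * k ^ i) Δ (adjSeq i) ∧
      HasLineDiam (adjSeq i) lam ∧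
      Nat.card (NType ν0 k i) = n * k ^ i ∧
      Nat.card (BType β0 βT i) = e * k ^ (2 * i) := by
  have key : ∀ i : ℕ,
      (bipGraph (adjSeq i)).Connected ∧
      IsBipartiteDegRank (d * k ^ i) Δ (adjSeq i) ∧
      HasLineDiam (adjSeq i) lam ∧
      Nat.card (NType ν0 k i) = n * k ^ i ∧
      Nat.card (BType β0 βT i) = e * k ^ (2 * i) := by
    intro i
    induction i with
    | zero =>
      have he0 : adjSeq 0 = adj0 := by
        funext x b
        exact propext (h0 x b)
      rw [he0]
      simpa using ⟨hconn, hH0, hld, hn, he⟩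
    | succ i ih =>
      obtain ⟨ihc, ihd, ihl, ihn, ihe⟩ := ih
      obtain ⟨c, dg, l, nn, ee⟩ := step_all (hstep i) ihd ihc hlam ihl ihn ihe
      refine ⟨c, ?_, l, ?_, ?_⟩
      · have : d * k ^ i * k = d * k ^ (i + 1) := by ring
        rwa [this] at dg
      · have : n * k ^ i * k = n * k ^ (i + 1) := by ring
        rwa [this] at nn
      · have : e * k ^ (2 * i) * k ^ 2 = e * k ^ (2 * (i + 1)) := by ring
        rwa [this] at ee
  exact fun i _ => key i
end

section
/- Let k, Δ, d ≥ 2 and let H be built by the 2-step method from the connected (d,Δ)-bipartite graph H0 using the [Δ,k]-transversal design T. Let Q be a block of H0 and let B_{Q,V} and B_{Q,V'} be two distinct blocks of H lying in the set B_Q. Then there are Δ pairwise internally-disjoint paths in H from B_{Q,V} to B_{Q,V'}, each of length at most 6 and lying entirely within the copy T_Q of T. -/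
section AuxWalks
variable {V : Type} {G : SimpleGraph V}

def wk2 {s a t : V} (h1 : G.Adj s a) (h2 : G.Adj a t) : G.Walk s t :=
  .cons h1 (.cons h2 .nil)

def wk4 {s a b c t : V} (h1 : G.Adj s a) (h2 : G.Adj a b) (h3 : G.Adj b c)
    (h4 : G.Adj c t) : G.Walk s t :=
  .cons h1 (.cons h2 (.cons h3 (.cons h4 .nil)))

def wk6 {s a b c e u t : V} (h1 : G.Adj s a) (h2 : G.Adj a b) (h3 : G.Adj b c)
    (h4 : G.Adj c e) (h5 : G.Adj e u) (h6 : G.Adj u t) : G.Walk s t :=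
  .cons h1 (.cons h2 (.cons h3 (.cons h4 (.cons h5 (.cons h6 .nil)))))

lemma wk2_support {s a t : V} (h1 : G.Adj s a) (h2 : G.Adj a t) :
    (wk2 h1 h2).support = [s, a, t] := rfl

lemma wk4_support {s a b c t : V} (h1 : G.Adj s a) (h2 : G.Adj a b) (h3 : G.Adj b c)
    (h4 : G.Adj c t) : (wk4 h1 h2 h3 h4).support = [s, a, b, c, t] := rfl

lemma wk6_support {s a b c e u t : V} (h1 : G.Adj s a) (h2 : G.Adj a b) (h3 : G.Adj b c)
    (h4 : G.Adj c e) (h5 : G.Adj e u) (h6 : G.Adj u t) :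
    (wk6 h1 h2 h3 h4 h5 h6).support = [s, a, b, c, e, u, t] := rfl

end AuxWalks

lemma nodup3 {α : Type} {a b c : α} (h1 : a ≠ b) (h2 : a ≠ c) (h3 : b ≠ c) :
    ([a, b, c] : List α).Nodup := by simp [h1, h2, h3]

lemma nodup5 {α : Type} {a b c d e : α} (h1 : a ≠ b) (h2 : a ≠ c) (h3 : a ≠ d) (h4 : a ≠ e)
    (h5 : b ≠ c) (h6 : b ≠ d) (h7 : b ≠ e) (h8 : c ≠ d) (h9 : c ≠ e) (h10 : d ≠ e) :
    ([a, b, c, d, e] : List α).Nodup := by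
  simp [h1, h2, h3, h4, h5, h6, h7, h8, h9, h10]

lemma nodup7 {α : Type} {a b c d e f g : α}
    (h1 : a ≠ b) (h2 : a ≠ c) (h3 : a ≠ d) (h4 : a ≠ e) (h5 : a ≠ f) (h6 : a ≠ g)
    (h7 : b ≠ c) (h8 : b ≠ d) (h9 : b ≠ e) (h10 : b ≠ f) (h11 : b ≠ g)
    (h12 : c ≠ d) (h13 : c ≠ e) (h14 : c ≠ f) (h15 : c ≠ g)
    (h16 : d ≠ e) (h17 : d ≠ f) (h18 : d ≠ g)
    (h19 : e ≠ f) (h20 : e ≠ g) (h21 : f ≠ g) :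
    ([a, b, c, d, e, f, g] : List α).Nodup := by
  simp [h1, h2, h3, h4, h5, h6, h7, h8, h9, h10, h11, h12, h13, h14, h15, h16, h17, h18,
    h19, h20, h21]

/-- Let `k, Δ, d ≥ 2` and let `H` (given by `adjH`) be built by the
2-step method from the connected `(d,Δ)`-bipartite graph `H0` using the
`[Δ,k]`-transversal design `T`.  If `(Q, V)` and `(Q, V')` are two distinct blocks
of `H` lying in the same set `B_Q` then there are `Δ` pairwise internally-disjoint
paths in `H` from `(Q, V)` to `(Q, V')`, each of length at most `6` and lying
entirely within the copy `T_Q` of `T` (i.e. every vertex on them is either a node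
of a group `G_p` with `p` adjacent to `Q` in `H0`, or a block of `B_Q`). -/
theorem twoStep_one_to_one_same_copy {ν0 β0 νT βT : Type} (d Δ k : ℕ)
    (hd : 2 ≤ d) (hΔ : 2 ≤ Δ) (hk : 2 ≤ k)
    (adj0 : ν0 → β0 → Prop) (groupT : νT → Fin Δ) (adjT : νT → βT → Prop)
    (adjH : ν0 × Fin k → β0 × βT → Prop)
    (hH0 : IsBipartiteDegRank d Δ adj0)
    (hconn : (bipGraph adj0).Connected)
    (h2 : TwoStep Δ k adj0 groupT adjT adjH)
    (Q : β0) (V V' : βT) (hVV : V ≠ V') :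
    ∃ p : Fin Δ → (bipGraph adjH).Walk (Sum.inr (Q, V)) (Sum.inr (Q, V')),
      (∀ i, (p i).IsPath ∧ (p i).length ≤ 6 ∧
        ∀ v ∈ (p i).support,
          (∃ x : ν0 × Fin k, v = Sum.inl x ∧ adj0 x.1 Q) ∨
          (∃ b : βT, v = Sum.inr (Q, b))) ∧
      PairwiseInternallyDisjoint p := by

  classical
  obtain ⟨m, rfl⟩ : ∃ m, Δ = m + 2 := ⟨Δ - 2, by omega⟩
  obtain ⟨td, hsupport, copy⟩ := h2
  obtain ⟨enum, f, g, -, -, -, -, hiff⟩ := copy Q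
  have bm : ∀ (b : βT) (i : Fin (m + 2)), ∃ x : νT,
      (groupT x = i ∧ adjT x b) ∧ ∀ y : νT, (groupT y = i ∧ adjT y b) → y = x :=
    fun b i => td.blockMeets b i
  have pg : ∀ (x y : νT), groupT x ≠ groupT y → ∃ b : βT,
      (adjT x b ∧ adjT y b) ∧ ∀ c : βT, (adjT x c ∧ adjT y c) → c = b :=
    fun x y h => td.pairGen x y h
  choose nbr hx huniq using bm
  choose gen hgxy genUniq using pg
  have hgrp : ∀ (b : βT) (i : Fin (m + 2)), groupT (nbr b i) = i := fun b i => (hx b i).1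
  have hadj : ∀ (b : βT) (i : Fin (m + 2)), adjT (nbr b i) b := fun b i => (hx b i).2
  have genAdj1 : ∀ (x y : νT) (h : groupT x ≠ groupT y), adjT x (gen x y h) :=
    fun x y h => (hgxy x y h).1
  have genAdj2 : ∀ (x y : νT) (h : groupT x ≠ groupT y), adjT y (gen x y h) :=
    fun x y h => (hgxy x y h).2
  set vb := g.symm V with hvbdef
  set vb' := g.symm V' with hvbdef'
  have hgvb : g vb = V := g.apply_symm_apply V
  have hgvb' : g vb' = V' := g.apply_symm_apply V'
  have hvbne : vb ≠ vb' := fun h => hVV (by rw [← hgvb, ← hgvb', h])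
  have adjHT : ∀ (x : νT) (b : βT), adjT x b →
      (bipGraph adjH).Adj (Sum.inl (↑(f x))) (Sum.inr (Q, g b)) :=
    fun x b h => ⟨by simp, Or.inl ⟨_, _, rfl, rfl, (hiff x b).1 h⟩⟩
  have adjV : ∀ x : νT, adjT x vb →
      (bipGraph adjH).Adj (Sum.inl (↑(f x))) (Sum.inr (Q, V)) := by
    intro x h
    have := adjHT x vb h
    rwa [hgvb] at this
  have adjV' : ∀ x : νT, adjT x vb' →
      (bipGraph adjH).Adj (Sum.inl (↑(f x))) (Sum.inr (Q, V')) := by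
    intro x h
    have := adjHT x vb' h
    rwa [hgvb'] at this
  have hcross : ∀ (b b' : βT) (i j : Fin (m + 2)), nbr b i = nbr b' j → i = j :=
    fun b b' i j h => by rw [← hgrp b i, h, hgrp b' j]
  have finl : ∀ {x y : νT},
      (Sum.inl (↑(f x)) : (ν0 × Fin k) ⊕ (β0 × βT)) = Sum.inl (↑(f y)) → x = y := by
    intro x y h
    exact f.injective (Subtype.ext (Sum.inl_injective h))
  have ginr : ∀ {b c : βT},
      (Sum.inr (Q, g b) : (ν0 × Fin k) ⊕ (β0 × βT)) = Sum.inr (Q, g c) → b = c := by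
    intro b c h
    exact g.injective (congrArg Prod.snd (Sum.inr_injective h))
  have hneV : ∀ b : βT, b ≠ vb →
      (Sum.inr (Q, g b) : (ν0 × Fin k) ⊕ (β0 × βT)) ≠ Sum.inr (Q, V) := by
    intro b hb h
    rw [← hgvb] at h
    exact hb (ginr h)
  have hneV' : ∀ b : βT, b ≠ vb' →
      (Sum.inr (Q, g b) : (ν0 × Fin k) ⊕ (β0 × βT)) ≠ Sum.inr (Q, V') := by
    intro b hb h
    rw [← hgvb'] at h
    exact hb (ginr h)
  have hST : (Sum.inr (Q, V) : (ν0 × Fin k) ⊕ (β0 × βT)) ≠ Sum.inr (Q, V') := by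
    simp [hVV]
  have hGoodU : ∀ i j, nbr vb i = nbr vb' i → nbr vb j = nbr vb' j → i = j := by
    intro i j hi hj
    by_contra hij
    have hgr2 : groupT (nbr vb i) ≠ groupT (nbr vb j) := by
      rw [hgrp, hgrp]; exact hij
    have h1 : vb = gen _ _ hgr2 := genUniq _ _ hgr2 vb ⟨hadj vb i, hadj vb j⟩
    have h2 : vb' = gen _ _ hgr2 := by
      refine genUniq _ _ hgr2 vb' ⟨?_, ?_⟩
      · rw [hi]; exact hadj vb' i
      · rw [hj]; exact hadj vb' j
    exact hvbne (h1.trans h2.symm)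
  have main : ∀ τ : Fin (m + 2) → Fin (m + 2),
      (∀ i, τ i ≠ i) →
      (∀ i, nbr vb (τ i) ≠ nbr vb' (τ i)) →
      (∀ i j, nbr vb i ≠ nbr vb' i → nbr vb j ≠ nbr vb' j → τ i = τ j → i = j) →
      ∃ p : Fin (m + 2) → (bipGraph adjH).Walk (Sum.inr (Q, V)) (Sum.inr (Q, V')),
        (∀ i, (p i).IsPath ∧ (p i).length ≤ 6 ∧
          ∀ v ∈ (p i).support,
            (∃ x : ν0 × Fin k, v = Sum.inl x ∧ adj0 x.1 Q) ∨
            (∃ b : βT, v = Sum.inr (Q, b))) ∧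
        PairwiseInternallyDisjoint p := by
    intro τ hτ1 hτ2 hτ3
    have hgr : ∀ i, groupT (nbr vb i) ≠ groupT (nbr vb' (τ i)) := by
      intro i; rw [hgrp, hgrp]; exact (hτ1 i).symm
    set W : Fin (m + 2) → βT := fun i => gen (nbr vb i) (nbr vb' (τ i)) (hgr i) with hWdef
    have hWa1 : ∀ i, adjT (nbr vb i) (W i) := fun i => genAdj1 _ _ _
    have hWa2 : ∀ i, adjT (nbr vb' (τ i)) (W i) := fun i => genAdj2 _ _ _
    have hWvb : ∀ i, W i ≠ vb := by
      intro i h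
      have h2 : nbr vb' (τ i) = nbr vb (τ i) := by
        refine huniq vb (τ i) _ ⟨hgrp vb' (τ i), ?_⟩
        rw [← h]; exact hWa2 i
      exact hτ2 i h2.symm
    have hWvb' : ∀ i, nbr vb i ≠ nbr vb' i → W i ≠ vb' := by
      intro i hbad h
      refine hbad (huniq vb' i _ ⟨hgrp vb i, ?_⟩)
      rw [← h]; exact hWa1 i
    have hWW : ∀ i j, nbr vb i ≠ nbr vb' i → nbr vb j ≠ nbr vb' j → W i = W j → i = j := by
      intro i j hbi hbj h
      by_contra hij
      rcases eq_or_ne (τ i) j with hji | hji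
      · subst hji
        have e1 : nbr vb' (τ i) = nbr (W i) (τ i) :=
          huniq (W i) (τ i) _ ⟨hgrp vb' (τ i), hWa2 i⟩
        have e2 : nbr vb (τ i) = nbr (W i) (τ i) := by
          refine huniq (W i) (τ i) _ ⟨hgrp vb (τ i), ?_⟩
          rw [h]; exact hWa1 (τ i)
        exact hbj (e2.trans e1.symm)
      rcases eq_or_ne (τ j) i with hij' | hij'
      · subst hij'
        have e1 : nbr vb' (τ j) = nbr (W j) (τ j) :=
          huniq (W j) (τ j) _ ⟨hgrp vb' (τ j), hWa2 j⟩
        have e2 : nbr vb (τ j) = nbr (W j) (τ j) := by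
          refine huniq (W j) (τ j) _ ⟨hgrp vb (τ j), ?_⟩
          rw [← h]; exact hWa1 (τ j)
        exact hbi (e2.trans e1.symm)
      have hgr2 : groupT (nbr vb i) ≠ groupT (nbr vb j) := by rw [hgrp, hgrp]; exact hij
      have e1 : vb = gen _ _ hgr2 := genUniq _ _ hgr2 vb ⟨hadj vb i, hadj vb j⟩
      have e2 : W i = gen _ _ hgr2 := by
        refine genUniq _ _ hgr2 (W i) ⟨hWa1 i, ?_⟩
        rw [h]; exact hWa1 j
      exact hWvb i (e2.trans e1.symm)
    have hXX' : ∀ i j, nbr vb i = nbr vb' (τ j) → False := by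
      intro i j h
      have hh : i = τ j := hcross _ _ _ _ h
      rw [hh] at h
      exact hτ2 j h
    set p : Fin (m + 2) → (bipGraph adjH).Walk (Sum.inr (Q, V)) (Sum.inr (Q, V')) :=
      fun i =>
        if hGi : nbr vb i = nbr vb' i then
          wk2 (adjV (nbr vb i) (hadj vb i)).symm
            (adjV' (nbr vb i) (by rw [hGi]; exact hadj vb' i))
        else
          wk4 (adjV (nbr vb i) (hadj vb i)).symm (adjHT _ _ (hWa1 i))
            (adjHT _ _ (hWa2 i)).symm (adjV' (nbr vb' (τ i)) (hadj vb' (τ i)))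
      with hpdef
    have hsupG : ∀ i, nbr vb i = nbr vb' i → (p i).support =
        [Sum.inr (Q, V), Sum.inl (↑(f (nbr vb i))), Sum.inr (Q, V')] := by
      intro i hGi
      simp only [hpdef]
      rw [dif_pos hGi, wk2_support]
    have hsupB : ∀ i, nbr vb i ≠ nbr vb' i → (p i).support =
        [Sum.inr (Q, V), Sum.inl (↑(f (nbr vb i))), Sum.inr (Q, g (W i)),
          Sum.inl (↑(f (nbr vb' (τ i)))), Sum.inr (Q, V')] := by
      intro i hGi
      simp only [hpdef]
      rw [dif_neg hGi, wk4_support]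
    refine ⟨p, fun i => ?_, fun i j v _ h => h, ?_⟩
    · by_cases hGi : nbr vb i = nbr vb' i
      · have hs := hsupG i hGi
        refine ⟨?_, ?_, ?_⟩
        · rw [SimpleGraph.Walk.isPath_def, hs]
          exact nodup3 (by simp) hST (by simp)
        · have hl := (p i).length_support
          rw [hs] at hl
          simp at hl
          omega
        · intro v hv
          rw [hs] at hv
          simp only [List.mem_cons, List.not_mem_nil, or_false] at hv
          rcases hv with rfl | rfl | rfl
          · exact Or.inr ⟨V, rfl⟩
          · exact Or.inl ⟨_, rfl, (f (nbr vb i)).2⟩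
          · exact Or.inr ⟨V', rfl⟩
      · have hs := hsupB i hGi
        refine ⟨?_, ?_, ?_⟩
        · rw [SimpleGraph.Walk.isPath_def, hs]
          refine nodup5 (by simp) (Ne.symm (hneV (W i) (hWvb i))) (by simp) hST (by simp)
            (fun h => hXX' i i (finl h)) (by simp) (by simp)
            (hneV' (W i) (hWvb' i hGi)) (by simp)
        · have hl := (p i).length_support
          rw [hs] at hl
          simp at hl
          omega
        · intro v hv
          rw [hs] at hv
          simp only [List.mem_cons, List.not_mem_nil, or_false] at hv
          rcases hv with rfl | rfl | rfl | rfl | rfl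
          · exact Or.inr ⟨V, rfl⟩
          · exact Or.inl ⟨_, rfl, (f (nbr vb i)).2⟩
          · exact Or.inr ⟨g (W i), rfl⟩
          · exact Or.inl ⟨_, rfl, (f (nbr vb' (τ i))).2⟩
          · exact Or.inr ⟨V', rfl⟩
    · intro i j v hv hvi hvj
      obtain ⟨hvS, hvT⟩ := hv i
      by_cases hGi : nbr vb i = nbr vb' i <;> by_cases hGj : nbr vb j = nbr vb' j
      · exact hGoodU i j hGi hGj
      · rw [hsupG i hGi] at hvi
        rw [hsupB j hGj] at hvj
        simp only [List.mem_cons, List.not_mem_nil, or_false] at hvi hvj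
        rcases hvi with rfl | rfl | rfl
        · exact absurd rfl hvS
        · rcases hvj with h | h | h | h | h
          · simp at h
          · exact hcross _ _ _ _ (finl h)
          · simp at h
          · exact (hXX' i j (finl h)).elim
          · simp at h
        · exact absurd rfl hvT
      · rw [hsupB i hGi] at hvi
        rw [hsupG j hGj] at hvj
        simp only [List.mem_cons, List.not_mem_nil, or_false] at hvi hvj
        rcases hvi with rfl | rfl | rfl | rfl | rfl
        · exact absurd rfl hvS
        · rcases hvj with h | h | h
          · simp at h
          · exact hcross _ _ _ _ (finl h)
          · simp at h
        · rcases hvj with h | h | h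
          · exact absurd h hvS
          · simp at h
          · exact absurd h hvT
        · rcases hvj with h | h | h
          · simp at h
          · exact (hXX' j i (finl h).symm).elim
          · simp at h
        · exact absurd rfl hvT
      · rw [hsupB i hGi] at hvi
        rw [hsupB j hGj] at hvj
        simp only [List.mem_cons, List.not_mem_nil, or_false] at hvi hvj
        rcases hvi with rfl | rfl | rfl | rfl | rfl
        · exact absurd rfl hvS
        · rcases hvj with h | h | h | h | h
          · simp at h
          · exact hcross _ _ _ _ (finl h)
          · simp at h
          · exact (hXX' i j (finl h)).elim
          · simp at h
        · rcases hvj with h | h | h | h | h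
          · exact absurd h hvS
          · simp at h
          · exact hWW i j hGi hGj (ginr h)
          · simp at h
          · exact absurd h hvT
        · rcases hvj with h | h | h | h | h
          · simp at h
          · exact (hXX' j i (finl h).symm).elim
          · simp at h
          · exact hτ3 i j hGi hGj (hcross _ _ _ _ (finl h))
          · simp at h
        · exact absurd rfl hvT
  have hone : (1 : Fin (m + 2)) ≠ 0 := by
    simp [Fin.ext_iff]
  have hσ : ∀ i : Fin (m + 2), i + 1 ≠ i := by
    intro i h
    have h2 : i + 1 = i + 0 := by rw [add_zero]; exact h
    exact hone (add_left_cancel h2)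
  by_cases hgood : ∃ i, nbr vb i = nbr vb' i
  · obtain ⟨gd, hgd⟩ := hgood
    have hOnly : ∀ j, nbr vb j = nbr vb' j → j = gd := fun j hj => hGoodU j gd hj hgd
    by_cases hm : m = 0
    · subst hm
      -- Δ = 2 case
      set bd := gd + 1 with hbddef
      have hbdne : bd ≠ gd := hσ gd
      have hbd : nbr vb bd ≠ nbr vb' bd := fun h => hbdne (hOnly bd h)
      have hdich : ∀ j : Fin (0 + 2), j = gd ∨ j = bd := by
        intro j
        by_cases hjg : j = gd
        · exact Or.inl hjg
        · refine Or.inr ?_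
          have h1 : j.val < 2 := j.isLt
          have h2 : gd.val < 2 := gd.isLt
          have h3 : bd.val = (gd.val + 1) % 2 := by
            rw [hbddef, Fin.val_add, Fin.val_one]
          have h4 : j.val ≠ gd.val := fun hh => hjg (Fin.ext hh)
          apply Fin.ext
          omega
      have hcardg := td.groupCard gd
      have hfin : Finite {x : νT // groupT x = gd} := Nat.finite_of_card_ne_zero (by omega)
      have hft : Fintype {x : νT // groupT x = gd} := Fintype.ofFinite _
      have hnt : Nontrivial {x : νT // groupT x = gd} := by
        refine Fintype.one_lt_card_iff_nontrivial.mp ?_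
        have hcc := Nat.card_eq_fintype_card (α := {x : νT // groupT x = gd})
        omega
      obtain ⟨y, hy⟩ := exists_ne (⟨nbr vb gd, hgrp vb gd⟩ : {x : νT // groupT x = gd})
      have hyg : groupT y.val = gd := y.2
      have hyne : y.val ≠ nbr vb gd := fun h => hy (Subtype.ext h)
      have hgrbd : groupT (nbr vb bd) ≠ groupT y.val := by
        rw [hgrp, hyg]; exact hbdne
      have hgrbd' : groupT y.val ≠ groupT (nbr vb' bd) := by
        rw [hgrp, hyg]; exact fun h => hbdne h.symm
      set W1 := gen (nbr vb bd) y.val hgrbd with hW1def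
      set W2 := gen y.val (nbr vb' bd) hgrbd' with hW2def
      have hW1a1 : adjT (nbr vb bd) W1 := genAdj1 _ _ _
      have hW1a2 : adjT y.val W1 := genAdj2 _ _ _
      have hW2a1 : adjT y.val W2 := genAdj1 _ _ _
      have hW2a2 : adjT (nbr vb' bd) W2 := genAdj2 _ _ _
      have hW1vb : W1 ≠ vb := by
        intro h
        apply hyne
        refine huniq vb gd _ ⟨hyg, ?_⟩
        rw [← h]; exact hW1a2
      have hW1vb' : W1 ≠ vb' := by
        intro h
        apply hbd
        refine huniq vb' bd _ ⟨hgrp vb bd, ?_⟩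
        rw [← h]; exact hW1a1
      have hW2vb : W2 ≠ vb := by
        intro h
        have e : nbr vb' bd = nbr vb bd := by
          refine huniq vb bd _ ⟨hgrp vb' bd, ?_⟩
          rw [← h]; exact hW2a2
        exact hbd e.symm
      have hW2vb' : W2 ≠ vb' := by
        intro h
        apply hyne
        have e : y.val = nbr vb' gd := by
          refine huniq vb' gd _ ⟨hyg, ?_⟩
          rw [← h]; exact hW2a1
        exact e.trans hgd.symm
      have hW12 : W1 ≠ W2 := by
        intro h
        apply hbd
        have e1 : nbr vb bd = nbr W1 bd := huniq W1 bd _ ⟨hgrp vb bd, hW1a1⟩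
        have e2 : nbr vb' bd = nbr W1 bd := by
          refine huniq W1 bd _ ⟨hgrp vb' bd, ?_⟩
          rw [h]; exact hW2a2
        exact e1.trans e2.symm
      set p : Fin (0 + 2) → (bipGraph adjH).Walk (Sum.inr (Q, V)) (Sum.inr (Q, V')) :=
        fun j =>
          if hGj : nbr vb j = nbr vb' j then
            wk2 (adjV (nbr vb j) (hadj vb j)).symm
              (adjV' (nbr vb j) (by rw [hGj]; exact hadj vb' j))
          else
            wk6 (adjV (nbr vb bd) (hadj vb bd)).symm (adjHT _ _ hW1a1)
              (adjHT _ _ hW1a2).symm (adjHT _ _ hW2a1)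
              (adjHT _ _ hW2a2).symm (adjV' (nbr vb' bd) (hadj vb' bd))
        with hpdef
      have hsupG : ∀ j, nbr vb j = nbr vb' j → (p j).support =
          [Sum.inr (Q, V), Sum.inl (↑(f (nbr vb j))), Sum.inr (Q, V')] := by
        intro j hGj
        simp only [hpdef]
        rw [dif_pos hGj, wk2_support]
      have hsupB : ∀ j, nbr vb j ≠ nbr vb' j → (p j).support =
          [Sum.inr (Q, V), Sum.inl (↑(f (nbr vb bd))), Sum.inr (Q, g W1),
            Sum.inl (↑(f y.val)), Sum.inr (Q, g W2), Sum.inl (↑(f (nbr vb' bd))),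
            Sum.inr (Q, V')] := by
        intro j hGj
        simp only [hpdef]
        rw [dif_neg hGj, wk6_support]
      refine ⟨p, fun j => ?_, fun a b v _ h => h, ?_⟩
      · by_cases hGj : nbr vb j = nbr vb' j
        · have hs := hsupG j hGj
          refine ⟨?_, ?_, ?_⟩
          · rw [SimpleGraph.Walk.isPath_def, hs]
            exact nodup3 (by simp) hST (by simp)
          · have hl := (p j).length_support
            rw [hs] at hl
            simp at hl
            omega
          · intro v hv
            rw [hs] at hv
            simp only [List.mem_cons, List.not_mem_nil, or_false] at hv
            rcases hv with rfl | rfl | rfl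
            · exact Or.inr ⟨V, rfl⟩
            · exact Or.inl ⟨_, rfl, (f (nbr vb j)).2⟩
            · exact Or.inr ⟨V', rfl⟩
        · have hs := hsupB j hGj
          refine ⟨?_, ?_, ?_⟩
          · rw [SimpleGraph.Walk.isPath_def, hs]
            refine nodup7 (by simp) (Ne.symm (hneV W1 hW1vb)) (by simp)
              (Ne.symm (hneV W2 hW2vb)) (by simp) hST
              (by simp) ?_ (by simp) ?_ (by simp)
              (by simp) ?_ (by simp) (hneV' W1 hW1vb')
              (by simp) ?_ (by simp)
              (by simp) (hneV' W2 hW2vb') (by simp)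
            · intro h
              exact hbdne (by rw [← hgrp vb bd, finl h, hyg])
            · exact fun h => hbd (finl h)
            · exact fun h => hW12 (ginr h)
            · intro h
              exact hbdne (by rw [← hgrp vb' bd, ← finl h, hyg])
          · have hl := (p j).length_support
            rw [hs] at hl
            simp at hl
            omega
          · intro v hv
            rw [hs] at hv
            simp only [List.mem_cons, List.not_mem_nil, or_false] at hv
            rcases hv with rfl | rfl | rfl | rfl | rfl | rfl | rfl
            · exact Or.inr ⟨V, rfl⟩
            · exact Or.inl ⟨_, rfl, (f (nbr vb bd)).2⟩
            · exact Or.inr ⟨g W1, rfl⟩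
            · exact Or.inl ⟨_, rfl, (f y.val).2⟩
            · exact Or.inr ⟨g W2, rfl⟩
            · exact Or.inl ⟨_, rfl, (f (nbr vb' bd)).2⟩
            · exact Or.inr ⟨V', rfl⟩
      · intro i j v hv hvi hvj
        obtain ⟨hvS, hvT⟩ := hv i
        by_cases hGi : nbr vb i = nbr vb' i <;> by_cases hGj : nbr vb j = nbr vb' j
        · exact hGoodU i j hGi hGj
        · have hig : i = gd := hOnly i hGi
          rw [hsupG i hGi] at hvi
          rw [hsupB j hGj] at hvj
          simp only [List.mem_cons, List.not_mem_nil, or_false] at hvi hvj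
          rcases hvi with rfl | rfl | rfl
          · exact absurd rfl hvS
          · rcases hvj with h | h | h | h | h | h | h
            · simp at h
            · have hibd : i = bd := hcross _ _ _ _ (finl h)
              exact absurd (hig.symm.trans hibd) (Ne.symm hbdne)
            · simp at h
            · rw [hig] at h
              exact absurd (finl h).symm hyne
            · simp at h
            · have hibd : i = bd := hcross _ _ _ _ (finl h)
              exact absurd (hig.symm.trans hibd) (Ne.symm hbdne)
            · simp at h
          · exact absurd rfl hvT
        · have hjg : j = gd := hOnly j hGj
          rw [hsupB i hGi] at hvi
          rw [hsupG j hGj] at hvj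
          simp only [List.mem_cons, List.not_mem_nil, or_false] at hvi hvj
          rcases hvi with rfl | rfl | rfl | rfl | rfl | rfl | rfl
          · exact absurd rfl hvS
          · rcases hvj with h | h | h
            · simp at h
            · have hbj : bd = j := hcross _ _ _ _ (finl h)
              exact absurd (hbj.trans hjg) hbdne
            · simp at h
          · rcases hvj with h | h | h
            · exact absurd h hvS
            · simp at h
            · exact absurd h hvT
          · rcases hvj with h | h | h
            · simp at h
            · rw [hjg] at h
              exact absurd (finl h) hyne
            · simp at h
          · rcases hvj with h | h | h
            · exact absurd h hvS
            · simp at h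
            · exact absurd h hvT
          · rcases hvj with h | h | h
            · simp at h
            · have hbj : bd = j := hcross _ _ _ _ (finl h)
              exact absurd (hbj.trans hjg) hbdne
            · simp at h
          · exact absurd rfl hvT
        · have hi2 : i = bd := by
            rcases hdich i with h | h
            · exact absurd (by rw [h]; exact hgd) hGi
            · exact h
          have hj2 : j = bd := by
            rcases hdich j with h | h
            · exact absurd (by rw [h]; exact hgd) hGj
            · exact h
          rw [hi2, hj2]
    · -- Δ ≥ 3 case
      have h2z : (1 + 1 : Fin (m + 2)) ≠ 0 := by
        intro h
        have hv2 : ((1 + 1 : Fin (m + 2)) : ℕ) = 2 := by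
          rw [Fin.add_def]
          simp [Fin.val_one]
          omega
        rw [h] at hv2
        simp at hv2
      refine main (fun i => if i + 1 = gd then gd + 1 else i + 1) ?_ ?_ ?_
      · intro i
        by_cases h1 : i + 1 = gd
        · simp only [if_pos h1]
          intro h
          have e : i + (1 + 1) = i + 0 := by
            rw [← add_assoc, h1, h, add_zero]
          exact h2z (add_left_cancel e)
        · simp only [if_neg h1]
          exact hσ i
      · intro i
        by_cases h1 : i + 1 = gd
        · simp only [if_pos h1]
          intro h
          exact hσ gd (hOnly _ h)
        · simp only [if_neg h1]
          intro h
          exact h1 (hOnly _ h)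
      · intro i j hbi hbj h
        by_cases h1 : i + 1 = gd <;> by_cases h2 : j + 1 = gd
        · exact add_right_cancel (h1.trans h2.symm)
        · simp only [if_pos h1, if_neg h2] at h
          have hgj : gd = j := add_right_cancel h
          exact absurd (by rw [← hgj]; exact hgd) hbj
        · simp only [if_neg h1, if_pos h2] at h
          have hgi : i = gd := add_right_cancel h
          exact absurd (by rw [hgi]; exact hgd) hbi
        · simp only [if_neg h1, if_neg h2] at h
          exact add_right_cancel h
  · push_neg at hgood
    exact main (fun i => i + 1) hσ (fun i => hgood _) (fun i j _ _ h => add_right_cancel h)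
end

section
/- Let k, d ≥ 2, let Δ = k + 1, and let H be built by the 2-step method from the connected (d,Δ)-bipartite graph H0 using a [Δ,k]-transversal design T. Let Q and Q' be distinct blocks of H0 that have at least 2 common neighbours in H0. Then for any block B_{Q,V} ∈ B_Q of H and any block B_{Q',V'} ∈ B_{Q'} of H there are Δ = k + 1 pairwise internally-disjoint paths in H from B_{Q,V} to B_{Q',V'}, each of length at most 6. -/
lemma bip_adj_rl {ν β : Type} {adj : ν → β → Prop} {x : ν} {b : β}
    (h : adj x b) : (bipGraph adj).Adj (Sum.inr b) (Sum.inl x) := by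
  simp [bipGraph, SimpleGraph.fromRel_adj]
  exact h

lemma bip_adj_lr {ν β : Type} {adj : ν → β → Prop} {x : ν} {b : β}
    (h : adj x b) : (bipGraph adj).Adj (Sum.inl x) (Sum.inr b) := by
  simp [bipGraph, SimpleGraph.fromRel_adj]
  exact h

inductive PDesc (N B : Type) where
  | d2 (x : N)
  | d4Q (x : N) (K : B) (y : N)
  | d4R (x : N) (F : B) (y : N)
  | d6 (x : N) (K : B) (w : N) (F : B) (y : N)

namespace PDesc

variable {N B : Type}

def xOf : PDesc N B → N
  | d2 x => x
  | d4Q x _ _ => x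
  | d4R x _ _ => x
  | d6 x _ _ _ _ => x

def yOf : PDesc N B → Option N
  | d2 _ => none
  | d4Q _ _ y => some y
  | d4R _ _ y => some y
  | d6 _ _ _ _ y => some y

def wOf : PDesc N B → Option N
  | d6 _ _ w _ _ => some w
  | _ => none

def KOf : PDesc N B → Option B
  | d4Q _ K _ => some K
  | d6 _ K _ _ _ => some K
  | _ => none

def FOf : PDesc N B → Option B
  | d4R _ F _ => some F
  | d6 _ _ _ F _ => some F
  | _ => none

def Ok (adj : N → B → Prop) (s t : B) : PDesc N B → Prop
  | d2 x => adj x s ∧ adj x t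
  | d4Q x K y => adj x s ∧ adj x K ∧ adj y K ∧ adj y t
  | d4R x F y => adj x s ∧ adj x F ∧ adj y F ∧ adj y t
  | d6 x K w F y => adj x s ∧ adj x K ∧ adj w K ∧ adj w F ∧ adj y F ∧ adj y t

def toWalk (adj : N → B → Prop) (s t : B) :
    (d : PDesc N B) → Ok adj s t d → (bipGraph adj).Walk (Sum.inr s) (Sum.inr t)
  | d2 x, h => .cons (bip_adj_rl h.1) (.cons (bip_adj_lr h.2) .nil)
  | d4Q x K y, h => .cons (bip_adj_rl h.1) (.cons (bip_adj_lr h.2.1)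
      (.cons (bip_adj_rl h.2.2.1) (.cons (bip_adj_lr h.2.2.2) .nil)))
  | d4R x F y, h => .cons (bip_adj_rl h.1) (.cons (bip_adj_lr h.2.1)
      (.cons (bip_adj_rl h.2.2.1) (.cons (bip_adj_lr h.2.2.2) .nil)))
  | d6 x K w F y, h => .cons (bip_adj_rl h.1) (.cons (bip_adj_lr h.2.1)
      (.cons (bip_adj_rl h.2.2.1) (.cons (bip_adj_lr h.2.2.2.1)
        (.cons (bip_adj_rl h.2.2.2.2.1) (.cons (bip_adj_lr h.2.2.2.2.2) .nil)))))

lemma length_toWalk (adj : N → B → Prop) (s t : B) (d : PDesc N B) (h : Ok adj s t d) :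
    (toWalk adj s t d h).length ≤ 6 := by
  cases d <;> simp [toWalk]

lemma support_toWalk (adj : N → B → Prop) (s t : B) (d : PDesc N B) (h : Ok adj s t d) :
    (toWalk adj s t d h).support =
      match d with
      | d2 x => [Sum.inr s, Sum.inl x, Sum.inr t]
      | d4Q x K y => [Sum.inr s, Sum.inl x, Sum.inr K, Sum.inl y, Sum.inr t]
      | d4R x F y => [Sum.inr s, Sum.inl x, Sum.inr F, Sum.inl y, Sum.inr t]
      | d6 x K w F y => [Sum.inr s, Sum.inl x, Sum.inr K, Sum.inl w, Sum.inr F,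
          Sum.inl y, Sum.inr t] := by
  cases d <;> simp [toWalk]

lemma isPath_toWalk (adj : N → B → Prop) (s t : B) (d : PDesc N B) (h : Ok adj s t d)
    (hst : s ≠ t)
    (hxy : ∀ a, d.yOf = some a → d.xOf ≠ a)
    (hxw : ∀ a, d.wOf = some a → d.xOf ≠ a)
    (hyw : ∀ a b, d.yOf = some a → d.wOf = some b → a ≠ b)
    (hKst : ∀ a, d.KOf = some a → a ≠ s ∧ a ≠ t)
    (hFst : ∀ a, d.FOf = some a → a ≠ s ∧ a ≠ t)
    (hKF : ∀ a b, d.KOf = some a → d.FOf = some b → a ≠ b) :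
    (toWalk adj s t d h).IsPath := by
  rw [SimpleGraph.Walk.isPath_def, support_toWalk]
  cases d with
  | d2 x => simp [hst]
  | d4Q x K y =>
    simp only [xOf, yOf, wOf, KOf, FOf] at hxy hKst
    have h1 := hxy y rfl
    have h2 := hKst K rfl
    simp [hst, h1, h2.1, h2.2, Ne.symm h2.1, Ne.symm h2.2]
  | d4R x F y =>
    simp only [xOf, yOf, wOf, KOf, FOf] at hxy hFst
    have h1 := hxy y rfl
    have h2 := hFst F rfl
    simp [hst, h1, h2.1, h2.2, Ne.symm h2.1, Ne.symm h2.2]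
  | d6 x K w F y =>
    simp only [xOf, yOf, wOf, KOf, FOf] at hxy hxw hyw hKst hFst hKF
    have h1 := hxy y rfl
    have h2 := hxw w rfl
    have h3 := hyw y w rfl rfl
    have h4 := hKst K rfl
    have h5 := hFst F rfl
    have h6 := hKF K F rfl rfl
    simp [hst, h1, h2, Ne.symm h3, h4.1, h4.2, h5.1, h5.2, h6,
      Ne.symm h4.1, Ne.symm h4.2, Ne.symm h5.1, Ne.symm h5.2, Ne.symm h6]

lemma mem_support_toWalk (adj : N → B → Prop) (s t : B) (d : PDesc N B) (h : Ok adj s t d)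
    (v : N ⊕ B) (hv : v ∈ (toWalk adj s t d h).support) :
    v = Sum.inr s ∨ v = Sum.inr t ∨ v = Sum.inl d.xOf ∨
    (∃ a, d.yOf = some a ∧ v = Sum.inl a) ∨ (∃ a, d.wOf = some a ∧ v = Sum.inl a) ∨
    (∃ b, d.KOf = some b ∧ v = Sum.inr b) ∨ (∃ b, d.FOf = some b ∧ v = Sum.inr b) := by
  rw [support_toWalk] at hv
  cases d with
  | d2 x =>
    simp only [List.mem_cons, List.mem_singleton, List.not_mem_nil, or_false] at hv
    rcases hv with h | h | h
    · exact Or.inl h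
    · exact Or.inr (Or.inr (Or.inl h))
    · exact Or.inr (Or.inl h)
  | d4Q x K y =>
    simp only [List.mem_cons, List.mem_singleton, List.not_mem_nil, or_false] at hv
    rcases hv with h | h | h | h | h
    · exact Or.inl h
    · exact Or.inr (Or.inr (Or.inl h))
    · exact Or.inr (Or.inr (Or.inr (Or.inr (Or.inr (Or.inl ⟨K, rfl, h⟩)))))
    · exact Or.inr (Or.inr (Or.inr (Or.inl ⟨y, rfl, h⟩)))
    · exact Or.inr (Or.inl h)
  | d4R x F y =>
    simp only [List.mem_cons, List.mem_singleton, List.not_mem_nil, or_false] at hv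
    rcases hv with h | h | h | h | h
    · exact Or.inl h
    · exact Or.inr (Or.inr (Or.inl h))
    · exact Or.inr (Or.inr (Or.inr (Or.inr (Or.inr (Or.inr ⟨F, rfl, h⟩)))))
    · exact Or.inr (Or.inr (Or.inr (Or.inl ⟨y, rfl, h⟩)))
    · exact Or.inr (Or.inl h)
  | d6 x K w F y =>
    simp only [List.mem_cons, List.mem_singleton, List.not_mem_nil, or_false] at hv
    rcases hv with h | h | h | h | h | h | h
    · exact Or.inl h
    · exact Or.inr (Or.inr (Or.inl h))
    · exact Or.inr (Or.inr (Or.inr (Or.inr (Or.inr (Or.inl ⟨K, rfl, h⟩)))))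
    · exact Or.inr (Or.inr (Or.inr (Or.inr (Or.inl ⟨w, rfl, h⟩))))
    · exact Or.inr (Or.inr (Or.inr (Or.inr (Or.inr (Or.inr ⟨F, rfl, h⟩)))))
    · exact Or.inr (Or.inr (Or.inr (Or.inl ⟨y, rfl, h⟩)))
    · exact Or.inr (Or.inl h)

end PDesc

lemma master {N B ι : Type} (adj : N → B → Prop) (s t : B) (hst : s ≠ t)
    (spec : ι → PDesc N B)
    (hOk : ∀ i, (spec i).Ok adj s t)
    (hx : ∀ i j, (spec i).xOf = (spec j).xOf → i = j)
    (hy : ∀ i j a, (spec i).yOf = some a → (spec j).yOf = some a → i = j)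
    (hw : ∀ i j a, (spec i).wOf = some a → (spec j).wOf = some a → i = j)
    (hxy : ∀ i j a, (spec j).yOf = some a → (spec i).xOf ≠ a)
    (hxw : ∀ i j a, (spec j).wOf = some a → (spec i).xOf ≠ a)
    (hyw : ∀ i j a b, (spec i).yOf = some a → (spec j).wOf = some b → a ≠ b)
    (hK : ∀ i j a, (spec i).KOf = some a → (spec j).KOf = some a → i = j)
    (hF : ∀ i j a, (spec i).FOf = some a → (spec j).FOf = some a → i = j)
    (hKF : ∀ i j a b, (spec i).KOf = some a → (spec j).FOf = some b → a ≠ b)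
    (hKst : ∀ i a, (spec i).KOf = some a → a ≠ s ∧ a ≠ t)
    (hFst : ∀ i a, (spec i).FOf = some a → a ≠ s ∧ a ≠ t) :
    ∃ p : ι → (bipGraph adj).Walk (Sum.inr s) (Sum.inr t),
      (∀ i, (p i).IsPath ∧ (p i).length ≤ 6) ∧ PairwiseInternallyDisjoint p := by
  refine ⟨fun i => PDesc.toWalk adj s t (spec i) (hOk i), fun i => ⟨?_, ?_⟩, ?_, ?_⟩
  · exact PDesc.isPath_toWalk adj s t (spec i) (hOk i) hst (fun a ha => hxy i i a ha)
      (fun a ha => hxw i i a ha) (fun a b ha hb => hyw i i a b ha hb)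
      (hKst i) (hFst i) (fun a b ha hb => hKF i i a b ha hb)
  · exact PDesc.length_toWalk adj s t (spec i) (hOk i)
  · exact fun i j v _ hv => hv
  · intro i j v hvl hvi hvj
    have hs : v ≠ Sum.inr s := (hvl i).1
    have ht : v ≠ Sum.inr t := (hvl i).2
    have ci := PDesc.mem_support_toWalk adj s t (spec i) (hOk i) v hvi
    have cj := PDesc.mem_support_toWalk adj s t (spec j) (hOk j) v hvj
    rcases ci with h | h | hxi | ⟨a, ha, hva⟩ | ⟨a, ha, hva⟩ | ⟨b, hb, hvb⟩ | ⟨b, hb, hvb⟩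
    · exact absurd h hs
    · exact absurd h ht
    · rcases cj with h | h | hxj | ⟨a', ha', hva'⟩ | ⟨a', ha', hva'⟩ | ⟨b', hb', hvb'⟩ |
        ⟨b', hb', hvb'⟩
      · exact absurd h hs
      · exact absurd h ht
      · exact hx i j (Sum.inl.inj (hxi.symm.trans hxj))
      · exact absurd (Sum.inl.inj (hxi.symm.trans hva')) (hxy i j a' ha')
      · exact absurd (Sum.inl.inj (hxi.symm.trans hva')) (hxw i j a' ha')
      · exact absurd (hxi.symm.trans hvb') (by simp)
      · exact absurd (hxi.symm.trans hvb') (by simp)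
    · rcases cj with h | h | hxj | ⟨a', ha', hva'⟩ | ⟨a', ha', hva'⟩ | ⟨b', hb', hvb'⟩ |
        ⟨b', hb', hvb'⟩
      · exact absurd h hs
      · exact absurd h ht
      · exact absurd (Sum.inl.inj (hxj.symm.trans hva)) (hxy j i a ha)
      · have : a = a' := Sum.inl.inj (hva.symm.trans hva')
        exact hy i j a ha (this ▸ ha')
      · exact absurd (Sum.inl.inj (hva.symm.trans hva')) (hyw i j a a' ha ha')
      · exact absurd (hva.symm.trans hvb') (by simp)
      · exact absurd (hva.symm.trans hvb') (by simp)
    · rcases cj with h | h | hxj | ⟨a', ha', hva'⟩ | ⟨a', ha', hva'⟩ | ⟨b', hb', hvb'⟩ |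
        ⟨b', hb', hvb'⟩
      · exact absurd h hs
      · exact absurd h ht
      · exact absurd (Sum.inl.inj (hxj.symm.trans hva)) (hxw j i a ha)
      · exact absurd (Sum.inl.inj (hva'.symm.trans hva)) (hyw j i a' a ha' ha)
      · have : a = a' := Sum.inl.inj (hva.symm.trans hva')
        exact hw i j a ha (this ▸ ha')
      · exact absurd (hva.symm.trans hvb') (by simp)
      · exact absurd (hva.symm.trans hvb') (by simp)
    · rcases cj with h | h | hxj | ⟨a', ha', hva'⟩ | ⟨a', ha', hva'⟩ | ⟨b', hb', hvb'⟩ |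
        ⟨b', hb', hvb'⟩
      · exact absurd h hs
      · exact absurd h ht
      · exact absurd (hxj.symm.trans hvb) (by simp)
      · exact absurd (hva'.symm.trans hvb) (by simp)
      · exact absurd (hva'.symm.trans hvb) (by simp)
      · have : b = b' := Sum.inr.inj (hvb.symm.trans hvb')
        exact hK i j b hb (this ▸ hb')
      · exact absurd (Sum.inr.inj (hvb.symm.trans hvb')) (hKF i j b b' hb hb')
    · rcases cj with h | h | hxj | ⟨a', ha', hva'⟩ | ⟨a', ha', hva'⟩ | ⟨b', hb', hvb'⟩ |
        ⟨b', hb', hvb'⟩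
      · exact absurd h hs
      · exact absurd h ht
      · exact absurd (hxj.symm.trans hvb) (by simp)
      · exact absurd (hva'.symm.trans hvb) (by simp)
      · exact absurd (hva'.symm.trans hvb) (by simp)
      · exact absurd (Sum.inr.inj (hvb'.symm.trans hvb)) (hKF j i b' b hb' hb)
      · have : b = b' := Sum.inr.inj (hvb.symm.trans hvb')
        exact hF i j b hb (this ▸ hb')


lemma fin_exists_ne_ne {n : ℕ} (hn : 3 ≤ n) (a b : Fin n) : ∃ c, c ≠ a ∧ c ≠ b := by
  by_contra h
  push_neg at h
  have hsub : (Finset.univ : Finset (Fin n)) ⊆ {a, b} := by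
    intro c _
    by_cases hc : c = a
    · simp [hc]
    · simp [h c hc]
  have := Finset.card_le_card hsub
  simp [Finset.card_univ] at this
  have h2 : ({a, b} : Finset (Fin n)).card ≤ 2 := by
    apply le_trans (Finset.card_insert_le _ _); simp
  omega

lemma fin_exists_ne_ne_ne {n : ℕ} (hn : 4 ≤ n) (a b c : Fin n) :
    ∃ d, d ≠ a ∧ d ≠ b ∧ d ≠ c := by
  by_contra h
  push_neg at h
  have hsub : (Finset.univ : Finset (Fin n)) ⊆ {a, b, c} := by
    intro d _
    by_cases h1 : d = a
    · simp [h1]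
    by_cases h2 : d = b
    · simp [h2]
    · simp [(h d h1 h2)]
  have := Finset.card_le_card hsub
  simp [Finset.card_univ] at this
  have h2 : ({a, b, c} : Finset (Fin n)).card ≤ 3 := by
    apply le_trans (Finset.card_insert_le _ _)
    have : ({b, c} : Finset (Fin n)).card ≤ 2 := by
      apply le_trans (Finset.card_insert_le _ _); simp
    omega
  omega

lemma fin_three_le {n : ℕ} (a b c : Fin n) (hab : a ≠ b) (hac : a ≠ c) (hbc : b ≠ c) :
    3 ≤ n := by
  have h1 : ({a, b, c} : Finset (Fin n)).card = 3 := by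
    rw [Finset.card_insert_of_notMem (by simp [hab, hac]),
      Finset.card_insert_of_notMem (by simp [hbc]), Finset.card_singleton]
  have := Finset.card_le_univ ({a, b, c} : Finset (Fin n))
  simp [Finset.card_univ] at this
  omega

lemma exists_perm_prescribe {n : ℕ} :
    ∀ (L : List (Fin n × Fin n)), (L.map Prod.fst).Nodup → (L.map Prod.snd).Nodup →
    ∃ σ : Equiv.Perm (Fin n), ∀ q ∈ L, σ q.1 = q.2 := by
  intro L
  induction L with
  | nil => exact fun _ _ => ⟨1, by simp⟩
  | cons hd tl ih =>
    intro h1 h2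
    simp only [List.map_cons, List.nodup_cons, List.mem_map] at h1 h2
    obtain ⟨σ', hσ'⟩ := ih h1.2 h2.2
    refine ⟨σ'.trans (Equiv.swap (σ' hd.1) hd.2), ?_⟩
    intro q hq
    rcases List.mem_cons.1 hq with rfl | hq
    · simp [Equiv.swap_apply_left]
    · have hfst : q.1 ≠ hd.1 := fun he => h1.1 ⟨q, hq, he⟩
      have hsnd : q.2 ≠ hd.2 := fun he => h2.1 ⟨q, hq, he⟩
      have h3 : σ' q.1 ≠ σ' hd.1 := fun he => hfst (σ'.injective he)
      simp only [Equiv.trans_apply, hσ' q hq]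
      rw [Equiv.swap_apply_of_ne_of_ne (by rw [hσ' q hq] at h3; exact h3) hsnd]

lemma copy_api {ν0 β0 νT βT : Type} {Δ k : ℕ}
    {groupT : νT → Fin Δ} {adjT : νT → βT → Prop}
    (adjH : ν0 × Fin k → β0 × βT → Prop)
    (td : IsTransversalDesign Δ k groupT adjT)
    (adj0 : ν0 → β0 → Prop) (R : β0)
    (hsupp : ∀ (x : ν0 × Fin k) (b : βT), adjH x (R, b) → adj0 x.1 R)
    (enum : Fin Δ → ν0) (f : νT ≃ {x : ν0 × Fin k // adj0 x.1 R}) (g : βT ≃ βT)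
    (henum : Function.Injective enum) (hadj : ∀ i, adj0 (enum i) R)
    (hsurj : ∀ q, adj0 q R → ∃ i, enum i = q)
    (hgrp : ∀ x, ((f x : ν0 × Fin k).1 = enum (groupT x)))
    (hiff : ∀ x b, adjT x b ↔ adjH (f x : ν0 × Fin k) (R, g b))
    (x0 : ν0 × Fin k) (b0 : βT) :
    ∃ (pick : βT → ν0 → ν0 × Fin k) (gen : ν0 × Fin k → ν0 × Fin k → βT),
      (∀ b a, adj0 a R → ((pick b a).1 = a ∧ adjH (pick b a) (R, b) ∧
        ∀ n : ν0 × Fin k, n.1 = a → adjH n (R, b) → n = pick b a)) ∧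
      (∀ n m : ν0 × Fin k, adj0 n.1 R → adj0 m.1 R → n.1 ≠ m.1 →
        (adjH n (R, gen n m) ∧ adjH m (R, gen n m) ∧
          ∀ b, adjH n (R, b) → adjH m (R, b) → b = gen n m)) := by
  classical
  -- key translation: for n a node of the copy, adjacency via f/g
  have key : ∀ (n : {x : ν0 × Fin k // adj0 x.1 R}) (b : βT),
      adjH (n : ν0 × Fin k) (R, b) ↔ adjT (f.symm n) (g.symm b) := by
    intro n b
    have := hiff (f.symm n) (g.symm b)
    simp only [Equiv.apply_symm_apply] at this
    exact this.symm
  have keygrp : ∀ (n : {x : ν0 × Fin k // adj0 x.1 R}),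
      enum (groupT (f.symm n)) = (n : ν0 × Fin k).1 := by
    intro n
    have := hgrp (f.symm n)
    simp only [Equiv.apply_symm_apply] at this
    exact this.symm
  have main1 : ∀ b a, adj0 a R → ∃ pb : ν0 × Fin k, pb.1 = a ∧ adjH pb (R, b) ∧
      ∀ n : ν0 × Fin k, n.1 = a → adjH n (R, b) → n = pb := by
    intro b a h
    obtain ⟨i, hie⟩ := hsurj a h
    obtain ⟨xT, hxT, huniq⟩ := td.blockMeets (g.symm b) i
    refine ⟨(f xT : ν0 × Fin k), ?_, ?_, ?_⟩
    · rw [hgrp xT, hxT.1, hie]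
    · have := (hiff xT (g.symm b)).1 hxT.2
      simpa using this
    · intro n hn1 hn2
      have hnR : adj0 n.1 R := hsupp n b hn2
      have h1 : adjT (f.symm ⟨n, hnR⟩) (g.symm b) := (key ⟨n, hnR⟩ b).1 hn2
      have h2 : groupT (f.symm ⟨n, hnR⟩) = i := by
        apply henum
        rw [keygrp ⟨n, hnR⟩, hn1, hie]
      have h3 := huniq (f.symm ⟨n, hnR⟩) ⟨h2, h1⟩
      have h4 : (⟨n, hnR⟩ : {x : ν0 × Fin k // adj0 x.1 R}) = f xT := by
        rw [← h3, Equiv.apply_symm_apply]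
      exact congrArg Subtype.val h4
  have main2 : ∀ n m : ν0 × Fin k, adj0 n.1 R → adj0 m.1 R → n.1 ≠ m.1 →
      ∃ bg : βT, adjH n (R, bg) ∧ adjH m (R, bg) ∧
        ∀ b, adjH n (R, b) → adjH m (R, b) → b = bg := by
    intro n m hn hm hnm
    set ns : {x : ν0 × Fin k // adj0 x.1 R} := ⟨n, hn⟩
    set ms : {x : ν0 × Fin k // adj0 x.1 R} := ⟨m, hm⟩
    have hgr : groupT (f.symm ns) ≠ groupT (f.symm ms) := by
      intro he
      exact hnm ((keygrp ns).symm.trans ((congrArg enum he).trans (keygrp ms)))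
    obtain ⟨bT, hbT, huniq⟩ := td.pairGen (f.symm ns) (f.symm ms) hgr
    refine ⟨g bT, ?_, ?_, ?_⟩
    · exact (key ns (g bT)).2 (by simpa using hbT.1)
    · exact (key ms (g bT)).2 (by simpa using hbT.2)
    · intro b hb1 hb2
      have h1 : adjT (f.symm ns) (g.symm b) := (key ns b).1 hb1
      have h2 : adjT (f.symm ms) (g.symm b) := (key ms b).1 hb2
      have := huniq (g.symm b) ⟨h1, h2⟩
      rw [← this, Equiv.apply_symm_apply]
  refine ⟨fun b a => if h : adj0 a R then (main1 b a h).choose else x0,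
    fun n m => if h : adj0 n.1 R ∧ adj0 m.1 R ∧ n.1 ≠ m.1 then
      (main2 n m h.1 h.2.1 h.2.2).choose else b0, ?_, ?_⟩
  · intro b a h
    simp only [dif_pos h]
    exact (main1 b a h).choose_spec
  · intro n m hn hm hnm
    simp only [dif_pos (⟨hn, hm, hnm⟩ : adj0 n.1 R ∧ adj0 m.1 R ∧ n.1 ≠ m.1)]
    exact (main2 n m hn hm hnm).choose_spec

lemma scheme {ν0 β0 βT : Type} {k : ℕ}
    (adj0 : ν0 → β0 → Prop) (adjH : ν0 × Fin k → β0 × βT → Prop)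
    (Q Q' : β0) (hQQ : Q ≠ Q') (V V' : βT)
    (enumQ : Fin (k+1) → ν0) (henumQ : Function.Injective enumQ)
    (hadjQ : ∀ i, adj0 (enumQ i) Q)
    (enumR : Fin (k+1) → ν0) (henumR : Function.Injective enumR)
    (hadjR : ∀ i, adj0 (enumR i) Q')
    (hsurjR : ∀ a, adj0 a Q' → ∃ j, enumR j = a)
    (hsuppQ : ∀ (n : ν0 × Fin k) (b : βT), adjH n (Q, b) → adj0 n.1 Q)
    (hsuppR : ∀ (n : ν0 × Fin k) (b : βT), adjH n (Q', b) → adj0 n.1 Q')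
    (pickQ : βT → ν0 → ν0 × Fin k) (genQ : ν0 × Fin k → ν0 × Fin k → βT)
    (hpickQ : ∀ b a, adj0 a Q → ((pickQ b a).1 = a ∧ adjH (pickQ b a) (Q, b) ∧
        ∀ n : ν0 × Fin k, n.1 = a → adjH n (Q, b) → n = pickQ b a))
    (hgenQ : ∀ n m : ν0 × Fin k, adj0 n.1 Q → adj0 m.1 Q → n.1 ≠ m.1 →
        (adjH n (Q, genQ n m) ∧ adjH m (Q, genQ n m) ∧
          ∀ b, adjH n (Q, b) → adjH m (Q, b) → b = genQ n m))
    (pickR : βT → ν0 → ν0 × Fin k) (genR : ν0 × Fin k → ν0 × Fin k → βT)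
    (hpickR : ∀ b a, adj0 a Q' → ((pickR b a).1 = a ∧ adjH (pickR b a) (Q', b) ∧
        ∀ n : ν0 × Fin k, n.1 = a → adjH n (Q', b) → n = pickR b a))
    (hgenR : ∀ n m : ν0 × Fin k, adj0 n.1 Q' → adj0 m.1 Q' → n.1 ≠ m.1 →
        (adjH n (Q', genR n m) ∧ adjH m (Q', genR n m) ∧
          ∀ b, adjH n (Q', b) → adjH m (Q', b) → b = genR n m))
    (X Y : Fin (k+1) → ν0 × Fin k)
    (hX : ∀ i, X i = pickQ V (enumQ i)) (hY : ∀ j, Y j = pickR V' (enumR j))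
    (cls : Fin (k+1) → Fin 4) (σ : Equiv.Perm (Fin (k+1))) (w : Fin (k+1) → ν0 × Fin k)
    (γ : ν0) (iγ jγ : Fin (k+1)) (hiγ : enumQ iγ = γ) (hjγ : enumR jγ = γ)
    (hγQ : adj0 γ Q) (hγR : adj0 γ Q')
    (SD : ∀ i j, X i = Y j → cls i = 0 ∧ j = σ i)
    (S0 : ∀ i, cls i = 0 → X i = Y (σ i))
    (S3a : ∀ i, cls i = 1 → adj0 (enumQ i) Q' ∧ enumQ i ≠ enumR (σ i))
    (S3b : ∀ i, cls i = 2 → enumR (σ i) = γ ∧ enumQ i ≠ γ)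
    (S3c : ∀ i, cls i = 3 → (w i).1 = γ ∧ enumQ i ≠ γ ∧ enumR (σ i) ≠ γ)
    (S4 : ∀ i j, cls i = 3 → cls j = 3 → w i = w j → i = j)
    (S6 : ∀ i j, cls i = 2 → cls j = 3 → Y (σ i) ≠ w j)
    (S7 : ∀ i j, cls i = 1 → cls j = 1 → i ≠ j →
      genR (X i) (Y (σ i)) ≠ genR (X j) (Y (σ j)))
    (S8 : ∀ i j, cls i = 1 → cls j = 3 → genR (X i) (Y (σ i)) ≠ genR (w j) (Y (σ j)))
    (S9a : ∀ i, cls i = 2 → Y (σ i) ≠ X iγ)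
    (S9b : ∀ i, cls i = 3 → w i ≠ X iγ)
    (S10 : ∀ i, cls i = 3 → w i ≠ Y jγ) :
    ∃ p : Fin (k+1) → (bipGraph adjH).Walk (Sum.inr (Q, V)) (Sum.inr (Q', V')),
      (∀ i, (p i).IsPath ∧ (p i).length ≤ 6) ∧ PairwiseInternallyDisjoint p := by
  classical
  have cls4 : ∀ c : Fin 4, c = 0 ∨ c = 1 ∨ c = 2 ∨ c = 3 := by decide
  -- basic facts
  have X1 : ∀ i, (X i).1 = enumQ i := fun i => by
    rw [hX]; exact (hpickQ V _ (hadjQ i)).1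
  have Y1 : ∀ j, (Y j).1 = enumR j := fun j => by
    rw [hY]; exact (hpickR V' _ (hadjR j)).1
  have Xadj : ∀ i, adjH (X i) (Q, V) := fun i => by
    rw [hX]; exact (hpickQ V _ (hadjQ i)).2.1
  have Yadj : ∀ j, adjH (Y j) (Q', V') := fun j => by
    rw [hY]; exact (hpickR V' _ (hadjR j)).2.1
  have Xinj : ∀ i j, X i = X j → i = j := fun i j h =>
    henumQ (by rw [← X1 i, ← X1 j, h])
  have Yinj : ∀ i j, Y i = Y j → i = j := fun i j h =>
    henumR (by rw [← Y1 i, ← Y1 j, h])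
  have nodeEqQ : ∀ (n m : ν0 × Fin k) (b : βT), adjH n (Q, b) → adjH m (Q, b) →
      n.1 = m.1 → n = m := by
    intro n m b h1 h2 h12
    have hn := hsuppQ n b h1
    rw [(hpickQ b n.1 hn).2.2 n rfl h1, (hpickQ b n.1 hn).2.2 m h12.symm h2]
  have nodeEqR : ∀ (n m : ν0 × Fin k) (b : βT), adjH n (Q', b) → adjH m (Q', b) →
      n.1 = m.1 → n = m := by
    intro n m b h1 h2 h12
    have hn := hsuppR n b h1
    rw [(hpickR b n.1 hn).2.2 n rfl h1, (hpickR b n.1 hn).2.2 m h12.symm h2]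
  have pickVγ : pickQ V γ = X iγ := by rw [hX iγ, hiγ]
  have pickV'γ : pickR V' γ = Y jγ := by rw [hY jγ, hjγ]
  -- validity of the generated blocks
  have K2v : ∀ i, cls i = 2 → adjH (X i) (Q, genQ (X i) (Y (σ i))) ∧
      adjH (Y (σ i)) (Q, genQ (X i) (Y (σ i))) := by
    intro i h
    have h1 : adj0 (X i).1 Q := by rw [X1]; exact hadjQ i
    have h2 : adj0 (Y (σ i)).1 Q := by rw [Y1, (S3b i h).1]; exact hγQ
    have h3 : (X i).1 ≠ (Y (σ i)).1 := by
      rw [X1, Y1, (S3b i h).1]; exact (S3b i h).2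
    exact ⟨(hgenQ _ _ h1 h2 h3).1, (hgenQ _ _ h1 h2 h3).2.1⟩
  have K3v : ∀ i, cls i = 3 → adjH (X i) (Q, genQ (X i) (w i)) ∧
      adjH (w i) (Q, genQ (X i) (w i)) := by
    intro i h
    have h1 : adj0 (X i).1 Q := by rw [X1]; exact hadjQ i
    have h2 : adj0 (w i).1 Q := by rw [(S3c i h).1]; exact hγQ
    have h3 : (X i).1 ≠ (w i).1 := by rw [X1, (S3c i h).1]; exact (S3c i h).2.1
    exact ⟨(hgenQ _ _ h1 h2 h3).1, (hgenQ _ _ h1 h2 h3).2.1⟩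
  have F1v : ∀ i, cls i = 1 → adjH (X i) (Q', genR (X i) (Y (σ i))) ∧
      adjH (Y (σ i)) (Q', genR (X i) (Y (σ i))) := by
    intro i h
    have h1 : adj0 (X i).1 Q' := by rw [X1]; exact (S3a i h).1
    have h2 : adj0 (Y (σ i)).1 Q' := by rw [Y1]; exact hadjR (σ i)
    have h3 : (X i).1 ≠ (Y (σ i)).1 := by rw [X1, Y1]; exact (S3a i h).2
    exact ⟨(hgenR _ _ h1 h2 h3).1, (hgenR _ _ h1 h2 h3).2.1⟩
  have F3v : ∀ i, cls i = 3 → adjH (w i) (Q', genR (w i) (Y (σ i))) ∧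
      adjH (Y (σ i)) (Q', genR (w i) (Y (σ i))) := by
    intro i h
    have h1 : adj0 (w i).1 Q' := by rw [(S3c i h).1]; exact hγR
    have h2 : adj0 (Y (σ i)).1 Q' := by rw [Y1]; exact hadjR (σ i)
    have h3 : (w i).1 ≠ (Y (σ i)).1 := by
      rw [(S3c i h).1, Y1]; exact fun he => (S3c i h).2.2 he.symm
    exact ⟨(hgenR _ _ h1 h2 h3).1, (hgenR _ _ h1 h2 h3).2.1⟩
  -- the path descriptors
  set spec : Fin (k+1) → PDesc (ν0 × Fin k) (β0 × βT) := fun i =>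
    if cls i = 0 then PDesc.d2 (X i)
    else if cls i = 1 then PDesc.d4R (X i) (Q', genR (X i) (Y (σ i))) (Y (σ i))
    else if cls i = 2 then PDesc.d4Q (X i) (Q, genQ (X i) (Y (σ i))) (Y (σ i))
    else PDesc.d6 (X i) (Q, genQ (X i) (w i)) (w i)
      (Q', genR (w i) (Y (σ i))) (Y (σ i)) with hspec
  have hs0 : ∀ i, cls i = 0 → spec i = PDesc.d2 (X i) := by
    intro i h; simp [hspec, h]
  have hs1 : ∀ i, cls i = 1 →
      spec i = PDesc.d4R (X i) (Q', genR (X i) (Y (σ i))) (Y (σ i)) := by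
    intro i h; simp [hspec, h]
  have hs2 : ∀ i, cls i = 2 →
      spec i = PDesc.d4Q (X i) (Q, genQ (X i) (Y (σ i))) (Y (σ i)) := by
    intro i h; simp [hspec, h]
  have hs3 : ∀ i, cls i = 3 →
      spec i = PDesc.d6 (X i) (Q, genQ (X i) (w i)) (w i)
        (Q', genR (w i) (Y (σ i))) (Y (σ i)) := by
    intro i h; simp [hspec, h]
  -- accessors
  have specx : ∀ i, (spec i).xOf = X i := by
    intro i
    rcases cls4 (cls i) with h | h | h | h
    · rw [hs0 i h]; rfl
    · rw [hs1 i h]; rfl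
    · rw [hs2 i h]; rfl
    · rw [hs3 i h]; rfl
  have specy : ∀ i a, (spec i).yOf = some a → cls i ≠ 0 ∧ a = Y (σ i) := by
    intro i a ha
    rcases cls4 (cls i) with h | h | h | h
    · rw [hs0 i h] at ha; exact absurd ha (by simp [PDesc.yOf])
    · rw [hs1 i h] at ha; exact ⟨by simp [h], (Option.some.inj ha).symm⟩
    · rw [hs2 i h] at ha; exact ⟨by simp [h], (Option.some.inj ha).symm⟩
    · rw [hs3 i h] at ha; exact ⟨by simp [h], (Option.some.inj ha).symm⟩
  have specyy : ∀ i, cls i ≠ 0 → (spec i).yOf = some (Y (σ i)) := by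
    intro i h
    rcases cls4 (cls i) with h' | h' | h' | h'
    · exact absurd h' h
    · rw [hs1 i h']; rfl
    · rw [hs2 i h']; rfl
    · rw [hs3 i h']; rfl
  have specw : ∀ i a, (spec i).wOf = some a → cls i = 3 ∧ a = w i := by
    intro i a ha
    rcases cls4 (cls i) with h | h | h | h
    · rw [hs0 i h] at ha; exact absurd ha (by simp [PDesc.wOf])
    · rw [hs1 i h] at ha; exact absurd ha (by simp [PDesc.wOf])
    · rw [hs2 i h] at ha; exact absurd ha (by simp [PDesc.wOf])
    · rw [hs3 i h] at ha; exact ⟨h, (Option.some.inj ha).symm⟩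
  have specK : ∀ i b, (spec i).KOf = some b →
      (cls i = 2 ∧ b = (Q, genQ (X i) (Y (σ i)))) ∨
      (cls i = 3 ∧ b = (Q, genQ (X i) (w i))) := by
    intro i b hb
    rcases cls4 (cls i) with h | h | h | h
    · rw [hs0 i h] at hb; exact absurd hb (by simp [PDesc.KOf])
    · rw [hs1 i h] at hb; exact absurd hb (by simp [PDesc.KOf])
    · rw [hs2 i h] at hb; exact Or.inl ⟨h, (Option.some.inj hb).symm⟩
    · rw [hs3 i h] at hb; exact Or.inr ⟨h, (Option.some.inj hb).symm⟩
  have specF : ∀ i b, (spec i).FOf = some b →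
      (cls i = 1 ∧ b = (Q', genR (X i) (Y (σ i)))) ∨
      (cls i = 3 ∧ b = (Q', genR (w i) (Y (σ i)))) := by
    intro i b hb
    rcases cls4 (cls i) with h | h | h | h
    · rw [hs0 i h] at hb; exact absurd hb (by simp [PDesc.FOf])
    · rw [hs1 i h] at hb; exact Or.inl ⟨h, (Option.some.inj hb).symm⟩
    · rw [hs2 i h] at hb; exact absurd hb (by simp [PDesc.FOf])
    · rw [hs3 i h] at hb; exact Or.inr ⟨h, (Option.some.inj hb).symm⟩
  have hst : (Q, V) ≠ (Q', V') := fun h => hQQ (congrArg Prod.fst h)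
  apply master adjH (Q, V) (Q', V') hst spec
  -- hOk
  · intro i
    rcases cls4 (cls i) with h | h | h | h
    · rw [hs0 i h]
      exact ⟨Xadj i, by rw [S0 i h]; exact Yadj (σ i)⟩
    · rw [hs1 i h]
      exact ⟨Xadj i, (F1v i h).1, (F1v i h).2, Yadj (σ i)⟩
    · rw [hs2 i h]
      exact ⟨Xadj i, (K2v i h).1, (K2v i h).2, Yadj (σ i)⟩
    · rw [hs3 i h]
      exact ⟨Xadj i, (K3v i h).1, (K3v i h).2, (F3v i h).1, (F3v i h).2, Yadj (σ i)⟩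
  -- hx
  · intro i j h
    rw [specx, specx] at h
    exact Xinj i j h
  -- hy
  · intro i j a hi hj
    obtain ⟨_, rfl⟩ := specy i a hi
    have h2 := (specy j _ hj).2
    exact σ.injective (Yinj _ _ h2)
  -- hw
  · intro i j a hi hj
    obtain ⟨h3i, rfl⟩ := specw i a hi
    obtain ⟨h3j, he⟩ := specw j _ hj
    exact S4 i j h3i h3j he
  -- hxy
  · intro i j a hj he
    rw [specx] at he
    obtain ⟨hj0, rfl⟩ := specy j a hj
    obtain ⟨hi0, hji⟩ := SD i (σ j) he
    have hji' : j = i := σ.injective hji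
    exact hj0 (by rw [hji']; exact hi0)
  -- hxw
  · intro i j a hj he
    rw [specx] at he
    obtain ⟨hj3, rfl⟩ := specw j a hj
    have h1 : enumQ i = γ := by rw [← X1 i, he, (S3c j hj3).1]
    have h2 : i = iγ := henumQ (by rw [h1, hiγ])
    exact S9b j hj3 (by rw [← h2, ← he])
  -- hyw
  · intro i j a b hi hj he
    obtain ⟨hi0, rfl⟩ := specy i a hi
    obtain ⟨hj3, rfl⟩ := specw j b hj
    by_cases hg : enumR (σ i) = γ
    · have : σ i = jγ := henumR (by rw [hg, hjγ])
      rw [this] at he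
      exact S10 j hj3 he.symm
    · apply hg
      rw [← Y1 (σ i), he, (S3c j hj3).1]
  -- hK
  · intro i j b hi hj
    rcases specK i b hi with ⟨h2i, rfl⟩ | ⟨h3i, rfl⟩
    · rcases specK j _ hj with ⟨h2j, he⟩ | ⟨h3j, he⟩
      · have hbe : genQ (X i) (Y (σ i)) = genQ (X j) (Y (σ j)) :=
          (Prod.mk.injEq _ _ _ _ ▸ he).2.symm ▸ rfl
        have := nodeEqQ (Y (σ i)) (Y (σ j)) _ (K2v i h2i).2
          (by rw [hbe]; exact (K2v j h2j).2)
          (by rw [Y1, Y1, (S3b i h2i).1, (S3b j h2j).1])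
        exact σ.injective (Yinj _ _ this)
      · have hbe : genQ (X i) (Y (σ i)) = genQ (X j) (w j) := congrArg Prod.snd he
        have := nodeEqQ (Y (σ i)) (w j) _ (K2v i h2i).2
          (by rw [hbe]; exact (K3v j h3j).2)
          (by rw [Y1, (S3b i h2i).1, (S3c j h3j).1])
        exact absurd this (S6 i j h2i h3j)
    · rcases specK j _ hj with ⟨h2j, he⟩ | ⟨h3j, he⟩
      · have hbe : genQ (X i) (w i) = genQ (X j) (Y (σ j)) := congrArg Prod.snd he
        have := nodeEqQ (w i) (Y (σ j)) _ (K3v i h3i).2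
          (by rw [hbe]; exact (K2v j h2j).2)
          (by rw [(S3c i h3i).1, Y1, (S3b j h2j).1])
        exact absurd this.symm (S6 j i h2j h3i)
      · have hbe : genQ (X i) (w i) = genQ (X j) (w j) := congrArg Prod.snd he
        have := nodeEqQ (w i) (w j) _ (K3v i h3i).2
          (by rw [hbe]; exact (K3v j h3j).2)
          (by rw [(S3c i h3i).1, (S3c j h3j).1])
        exact S4 i j h3i h3j this
  -- hF
  · intro i j b hi hj
    rcases specF i b hi with ⟨h1i, rfl⟩ | ⟨h3i, rfl⟩
    · rcases specF j _ hj with ⟨h1j, he⟩ | ⟨h3j, he⟩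
      · by_contra hij
        exact S7 i j h1i h1j hij (congrArg Prod.snd he)
      · exact absurd (congrArg Prod.snd he) (S8 i j h1i h3j)
    · rcases specF j _ hj with ⟨h1j, he⟩ | ⟨h3j, he⟩
      · exact absurd (congrArg Prod.snd he).symm (S8 j i h1j h3i)
      · have hbe : genR (w i) (Y (σ i)) = genR (w j) (Y (σ j)) := congrArg Prod.snd he
        have := nodeEqR (w i) (w j) _ (F3v i h3i).1
          (by rw [hbe]; exact (F3v j h3j).1)
          (by rw [(S3c i h3i).1, (S3c j h3j).1])
        exact S4 i j h3i h3j this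
  -- hKF
  · intro i j a b hi hj
    have ha : a.1 = Q := by
      rcases specK i a hi with ⟨_, rfl⟩ | ⟨_, rfl⟩ <;> rfl
    have hb : b.1 = Q' := by
      rcases specF j b hj with ⟨_, rfl⟩ | ⟨_, rfl⟩ <;> rfl
    intro he
    exact hQQ (by rw [← ha, ← hb, he])
  -- hKst
  · intro i a hi
    constructor
    · intro he
      rcases specK i a hi with ⟨h2i, rfl⟩ | ⟨h3i, rfl⟩
      · have hbv : genQ (X i) (Y (σ i)) = V := congrArg Prod.snd he
        have hadj : adjH (Y (σ i)) (Q, V) := by rw [← hbv]; exact (K2v i h2i).2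
        have h1 : (Y (σ i)).1 = γ := by rw [Y1, (S3b i h2i).1]
        have := (hpickQ V γ hγQ).2.2 (Y (σ i)) h1 hadj
        exact S9a i h2i (by rw [this, pickVγ])
      · have hbv : genQ (X i) (w i) = V := congrArg Prod.snd he
        have hadj : adjH (w i) (Q, V) := by rw [← hbv]; exact (K3v i h3i).2
        have := (hpickQ V γ hγQ).2.2 (w i) (S3c i h3i).1 hadj
        exact S9b i h3i (by rw [this, pickVγ])
    · intro he
      have ha : a.1 = Q := by
        rcases specK i a hi with ⟨_, rfl⟩ | ⟨_, rfl⟩ <;> rfl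
      exact hQQ (by rw [← ha, he])
  -- hFst
  · intro i a hi
    constructor
    · intro he
      have ha : a.1 = Q' := by
        rcases specF i a hi with ⟨_, rfl⟩ | ⟨_, rfl⟩ <;> rfl
      exact hQQ (by rw [← ha, he])
    · intro he
      rcases specF i a hi with ⟨h1i, rfl⟩ | ⟨h3i, rfl⟩
      · have hbv : genR (X i) (Y (σ i)) = V' := congrArg Prod.snd he
        have hadj : adjH (X i) (Q', V') := by rw [← hbv]; exact (F1v i h1i).1
        obtain ⟨j', hj'⟩ := hsurjR (enumQ i) (S3a i h1i).1
        have h1 : X i = pickR V' (enumQ i) :=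
          (hpickR V' (enumQ i) (S3a i h1i).1).2.2 (X i) (X1 i) hadj
        have h2 : X i = Y j' := by rw [h1, hY j', hj']
        have := (SD i j' h2).1
        rw [this] at h1i
        exact absurd h1i (by decide)
      · have hbv : genR (w i) (Y (σ i)) = V' := congrArg Prod.snd he
        have hadj : adjH (w i) (Q', V') := by rw [← hbv]; exact (F3v i h3i).1
        have := (hpickR V' γ hγR).2.2 (w i) (S3c i h3i).1 hadj
        exact S10 i h3i (by rw [this, pickV'γ])

/-- Let `k, d ≥ 2`, let `Δ = k + 1`, and let `H` (given by `adjH`) be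
built by the 2-step method from the connected `(d, k+1)`-bipartite graph `H0` using
a `[k+1,k]`-transversal design `T`.  If `Q` and `Q'` are distinct blocks of `H0`
with at least `2` common neighbours in `H0`, then for any blocks `(Q, V) ∈ B_Q` and
`(Q', V') ∈ B_{Q'}` of `H` there are `k + 1` pairwise internally-disjoint paths in
`H` from `(Q, V)` to `(Q', V')`, each of length at most `6`. -/
theorem twoStep_one_to_one_excess_two_common {ν0 β0 νT βT : Type} (d k : ℕ)
    (hd : 2 ≤ d) (hk : 2 ≤ k)
    (adj0 : ν0 → β0 → Prop) (groupT : νT → Fin (k + 1)) (adjT : νT → βT → Prop)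
    (adjH : ν0 × Fin k → β0 × βT → Prop)
    (hH0 : IsBipartiteDegRank d (k + 1) adj0)
    (hconn : (bipGraph adj0).Connected)
    (h2 : TwoStep (k + 1) k adj0 groupT adjT adjH)
    (Q Q' : β0) (hQQ : Q ≠ Q')
    (p1 p2 : ν0) (hp12 : p1 ≠ p2)
    (hp1 : adj0 p1 Q) (hp1' : adj0 p1 Q') (hp2 : adj0 p2 Q) (hp2' : adj0 p2 Q')
    (V V' : βT) :
    ∃ p : Fin (k + 1) → (bipGraph adjH).Walk (Sum.inr (Q, V)) (Sum.inr (Q', V')),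
      (∀ i, (p i).IsPath ∧ (p i).length ≤ 6) ∧
      PairwiseInternallyDisjoint p := by
  classical
  have hk0 : 0 < k := by omega
  obtain ⟨enumQ, fQ, gQ, henumQ, hadjQ, hsurjQ, hgrpQ, hiffQ⟩ := h2.copy Q
  obtain ⟨enumR, fR, gR, henumR, hadjR, hsurjR, hgrpR, hiffR⟩ := h2.copy Q'
  have hsuppQ : ∀ (n : ν0 × Fin k) (b : βT), adjH n (Q, b) → adj0 n.1 Q :=
    fun n b h => h2.supp n Q b h
  have hsuppR : ∀ (n : ν0 × Fin k) (b : βT), adjH n (Q', b) → adj0 n.1 Q' :=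
    fun n b h => h2.supp n Q' b h
  obtain ⟨pickQ, genQ, hpickQ, hgenQ⟩ := copy_api adjH h2.td adj0 Q hsuppQ
    enumQ fQ gQ henumQ hadjQ hsurjQ hgrpQ hiffQ (p1, ⟨0, hk0⟩) V
  obtain ⟨pickR, genR, hpickR, hgenR⟩ := copy_api adjH h2.td adj0 Q' hsuppR
    enumR fR gR henumR hadjR hsurjR hgrpR hiffR (p1, ⟨0, hk0⟩) V
  set X : Fin (k+1) → ν0 × Fin k := fun i => pickQ V (enumQ i) with hXdef
  set Y : Fin (k+1) → ν0 × Fin k := fun j => pickR V' (enumR j) with hYdef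
  have X1 : ∀ i, (X i).1 = enumQ i := fun i => (hpickQ V _ (hadjQ i)).1
  have Y1 : ∀ j, (Y j).1 = enumR j := fun j => (hpickR V' _ (hadjR j)).1
  have Xinj : ∀ i j, X i = X j → i = j := fun i j h =>
    henumQ (by rw [← X1 i, ← X1 j, h])
  have Yinj : ∀ i j, Y i = Y j → i = j := fun i j h =>
    henumR (by rw [← Y1 i, ← Y1 j, h])
  have nodeEqR : ∀ (n m : ν0 × Fin k) (b : βT), adjH n (Q', b) → adjH m (Q', b) →
      n.1 = m.1 → n = m := by
    intro n m b h1 h2' h12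
    have hn := hsuppR n b h1
    rw [(hpickR b n.1 hn).2.2 n rfl h1, (hpickR b n.1 hn).2.2 m h12.symm h2']
  obtain ⟨i1, hi1⟩ := hsurjQ p1 hp1
  obtain ⟨i2, hi2⟩ := hsurjQ p2 hp2
  obtain ⟨j1, hj1⟩ := hsurjR p1 hp1'
  obtain ⟨j2, hj2⟩ := hsurjR p2 hp2'
  have hi12 : i1 ≠ i2 := fun h => hp12 (by rw [← hi1, ← hi2, h])
  have hj12 : j1 ≠ j2 := fun h => hp12 (by rw [← hj1, ← hj2, h])
  by_cases hD2 : ∃ ia ib : Fin (k+1), ia ≠ ib ∧ (∃ j, X ia = Y j) ∧ (∃ j, X ib = Y j)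
  · -- CASE 1 : at least two "direct" indices
    obtain ⟨ia, ib, hab, hDa', hDb'⟩ := hD2
    obtain ⟨ja, hja⟩ := hDa'
    set Dir : Fin (k+1) → Prop := fun i => ∃ j, X i = Y j with hDirdef
    have hDa : Dir ia := ⟨ja, hja⟩
    have hDb : Dir ib := hDb'
    have hjγ : enumR ja = enumQ ia := by rw [← Y1, ← hja, X1]
    have hγQ : adj0 (enumQ ia) Q := hadjQ ia
    have hγR : adj0 (enumQ ia) Q' := by rw [← hjγ]; exact hadjR ja
    have hlξ : Fin.last k ≠ (X ia).2.castSucc := (Fin.castSucc_lt_last _).ne'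
    obtain ⟨ρ, hρ⟩ := exists_perm_prescribe
      [(ia, Fin.last k), (ib, (X ia).2.castSucc)]
      (by simp [hab])
      (by simp [hlξ])
    have hρ1 : ρ ia = Fin.last k := hρ (ia, Fin.last k) (by simp)
    have hρ2 : ρ ib = (X ia).2.castSucc := hρ (ib, (X ia).2.castSucc) (by simp)
    set w : Fin (k+1) → ν0 × Fin k := fun i =>
      (enumQ ia, if h : ρ i = Fin.last k then (⟨0, hk0⟩ : Fin k) else (ρ i).castPred h)
      with hwdef
    have hw1 : ∀ i, (w i).1 = enumQ ia := fun i => rfl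
    have hwcs : ∀ i, i ≠ ia → ((w i).2).castSucc = ρ i := by
      intro i hi
      have hne : ρ i ≠ Fin.last k := fun he => hi (ρ.injective (he.trans hρ1.symm))
      simp only [hwdef, dif_neg hne]
      exact Fin.castSucc_castPred _ _
    have hwinj : ∀ i j, i ≠ ia → j ≠ ia → w i = w j → i = j := by
      intro i j hi hj he
      apply ρ.injective
      rw [← hwcs i hi, ← hwcs j hj, congrArg Prod.snd he]
    have hwXa : ∀ i, i ≠ ia → i ≠ ib → w i ≠ X ia := by
      intro i hA hB he
      apply hB; apply ρ.injective
      rw [hρ2, ← hwcs i hA, congrArg Prod.snd he]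
    set prt : Fin (k+1) → Fin (k+1) :=
      fun i => if h : Dir i then h.choose else i with hprtdef
    have hprtspec : ∀ i, Dir i → X i = Y (prt i) := by
      intro i h
      simp only [hprtdef, dif_pos h]
      exact h.choose_spec
    have hprtinj : ∀ i j, Dir i → Dir j → prt i = prt j → i = j := by
      intro i j hi hj he
      exact Xinj i j (by rw [hprtspec i hi, he, ← hprtspec j hj])
    obtain ⟨σ, hσl⟩ := exists_perm_prescribe
      (((Finset.univ.filter Dir).toList).map (fun i => (i, prt i)))
      (by
        rw [List.map_map, show (Prod.fst ∘ fun i => (i, prt i)) = id from rfl,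
          List.map_id]
        exact (Finset.univ.filter Dir).nodup_toList)
      (by
        rw [List.map_map]
        refine List.Nodup.map_on ?_ (Finset.univ.filter Dir).nodup_toList
        intro i hi j hj he
        rw [Finset.mem_toList, Finset.mem_filter] at hi hj
        exact hprtinj i j hi.2 hj.2 he)
    have hσD : ∀ i, Dir i → σ i = prt i := by
      intro i h
      exact hσl (i, prt i) (List.mem_map.2
        ⟨i, Finset.mem_toList.2 (Finset.mem_filter.2 ⟨Finset.mem_univ i, h⟩), rfl⟩)
    have hprtja : prt ia = ja := Yinj _ _ ((hprtspec ia hDa).symm.trans hja)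
    set cls : Fin (k+1) → Fin 4 := fun i => if Dir i then 0 else 3 with hclsdef
    have hclsval : ∀ i, cls i = (if Dir i then 0 else 3 : Fin 4) := fun i => rfl
    have hcls0 : ∀ i, Dir i → cls i = 0 := by
      intro i h; rw [hclsval, if_pos h]
    have hcls3 : ∀ i, ¬ Dir i → cls i = 3 := by
      intro i h; rw [hclsval, if_neg h]
    have hinv0 : ∀ i, cls i = 0 → Dir i := by
      intro i h
      by_contra hn
      rw [hcls3 i hn] at h
      exact absurd h (by decide)
    have hinv3 : ∀ i, cls i = 3 → ¬ Dir i := by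
      intro i h hn
      rw [hcls0 i hn] at h
      exact absurd h (by decide)
    have hne12 : ∀ i c, cls i = c → c = 1 ∨ c = 2 → False := by
      intro i c h hc
      by_cases hn : Dir i
      · rw [hcls0 i hn] at h
        rcases hc with rfl | rfl
        · exact absurd h (by decide)
        · exact absurd h (by decide)
      · rw [hcls3 i hn] at h
        rcases hc with rfl | rfl
        · exact absurd h (by decide)
        · exact absurd h (by decide)
    have hnd : ∀ i, ¬ Dir i → i ≠ ia ∧ i ≠ ib := by
      intro i h
      constructor
      · intro he; exact h (by rw [he]; exact hDa)
      · intro he; exact h (by rw [he]; exact hDb)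
    apply scheme adj0 adjH Q Q' hQQ V V' enumQ henumQ hadjQ enumR henumR hadjR hsurjR
      hsuppQ hsuppR pickQ genQ hpickQ hgenQ pickR genR hpickR hgenR X Y
      (fun i => rfl) (fun j => rfl) cls σ w (enumQ ia) ia ja rfl hjγ hγQ hγR
    -- SD
    · intro i j h
      have hDi : Dir i := ⟨j, h⟩
      refine ⟨hcls0 i hDi, ?_⟩
      rw [hσD i hDi]
      exact Yinj _ _ (h.symm.trans (hprtspec i hDi))
    -- S0
    · intro i h
      have hDi := hinv0 i h
      rw [hσD i hDi]
      exact hprtspec i hDi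
    -- S3a
    · intro i h
      exact (hne12 i 1 h (Or.inl rfl)).elim
    -- S3b
    · intro i h
      exact (hne12 i 2 h (Or.inr rfl)).elim
    -- S3c
    · intro i h
      have hn := hinv3 i h
      obtain ⟨hA, hB⟩ := hnd i hn
      refine ⟨hw1 i, ?_, ?_⟩
      · intro he
        exact hn (by rw [henumQ he]; exact hDa)
      · intro he
        have h1 : σ i = ja := henumR (he.trans hjγ.symm)
        have h2 : σ ia = ja := by rw [hσD ia hDa, hprtja]
        exact hA (σ.injective (h1.trans h2.symm))
    -- S4
    · intro i j hi hj he
      exact hwinj i j (hnd i (hinv3 i hi)).1 (hnd j (hinv3 j hj)).1 he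
    -- S6
    · intro i j hi _
      exact (hne12 i 2 hi (Or.inr rfl)).elim
    -- S7
    · intro i j hi _ _
      exact (hne12 i 1 hi (Or.inl rfl)).elim
    -- S8
    · intro i j hi _
      exact (hne12 i 1 hi (Or.inl rfl)).elim
    -- S9a
    · intro i h
      exact (hne12 i 2 h (Or.inr rfl)).elim
    -- S9b
    · intro i h
      exact hwXa i (hnd i (hinv3 i h)).1 (hnd i (hinv3 i h)).2
    -- S10
    · intro i h
      intro he
      exact hwXa i (hnd i (hinv3 i h)).1 (hnd i (hinv3 i h)).2 (he.trans hja.symm)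

  · by_cases hD1 : ∃ i j : Fin (k+1), X i = Y j
    · -- CASE 2 : exactly one direct index
      obtain ⟨iδ, jδ, hδ⟩ := hD1
      have huniq : ∀ i, (∃ j, X i = Y j) → i = iδ := by
        intro i hi
        by_contra hne
        exact hD2 ⟨i, iδ, hne, hi, ⟨jδ, hδ⟩⟩
      have hjδuniq : ∀ j, X iδ = Y j → j = jδ := fun j h => Yinj _ _ (h.symm.trans hδ)
      set iα : Fin (k+1) := if iδ = i1 then i2 else i1 with hiαdef
      have hiαδ : iα ≠ iδ := by
        rw [hiαdef]; split_ifs with h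
        · rw [h]; exact Ne.symm hi12
        · exact fun he => h he.symm
      have hγR : adj0 (enumQ iα) Q' := by
        rw [hiαdef]; split_ifs with h
        · rw [hi2]; exact hp2'
        · rw [hi1]; exact hp1'
      have hγQ : adj0 (enumQ iα) Q := hadjQ iα
      obtain ⟨jγ, hjγ⟩ := hsurjR (enumQ iα) hγR
      obtain ⟨iπ, hπ1, hπ2⟩ := fin_exists_ne_ne (by omega : 3 ≤ k+1) iδ iα
      obtain ⟨jtA, htA1, htA2⟩ := fin_exists_ne_ne (by omega : 3 ≤ k+1) jδ jγ
      have hXα1 : (X iα).1 = enumQ iα := X1 iα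
      have hYγ1 : (Y jγ).1 = enumQ iα := by rw [Y1, hjγ]
      have hXYαγ : X iα ≠ Y jγ := by
        intro he
        exact hiαδ (huniq iα ⟨jγ, he⟩)
      have hξη : (X iα).2 ≠ (Y jγ).2 := by
        intro he
        exact hXYαγ (Prod.ext (hXα1.trans hYγ1.symm) he)
      have hlξ : Fin.last k ≠ (X iα).2.castSucc := (Fin.castSucc_lt_last _).ne'
      have hlη : Fin.last k ≠ (Y jγ).2.castSucc := (Fin.castSucc_lt_last _).ne'
      have hξη' : (X iα).2.castSucc ≠ (Y jγ).2.castSucc :=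
        fun he => hξη (Fin.castSucc_injective _ he)
      obtain ⟨ρ, hρ⟩ := exists_perm_prescribe
        [(iδ, Fin.last k), (iα, (X iα).2.castSucc), (iπ, (Y jγ).2.castSucc)]
        (by simp [Ne.symm hiαδ, Ne.symm hπ1, Ne.symm hπ2])
        (by simp [hlξ, hlη, hξη'])
      have hρ1 : ρ iδ = Fin.last k := hρ (iδ, Fin.last k) (by simp)
      have hρ2 : ρ iα = (X iα).2.castSucc := hρ (iα, (X iα).2.castSucc) (by simp)
      have hρ3 : ρ iπ = (Y jγ).2.castSucc := hρ (iπ, (Y jγ).2.castSucc) (by simp)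
      set w : Fin (k+1) → ν0 × Fin k := fun i =>
        (enumQ iα, if h : ρ i = Fin.last k then (⟨0, hk0⟩ : Fin k) else (ρ i).castPred h)
        with hwdef
      have hw1 : ∀ i, (w i).1 = enumQ iα := fun i => rfl
      have hwcs : ∀ i, i ≠ iδ → ((w i).2).castSucc = ρ i := by
        intro i hi
        have hne : ρ i ≠ Fin.last k := fun he => hi (ρ.injective (he.trans hρ1.symm))
        simp only [hwdef, dif_neg hne]
        exact Fin.castSucc_castPred _ _
      have hwinj : ∀ i j, i ≠ iδ → j ≠ iδ → w i = w j → i = j := by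
        intro i j hi hj he
        apply ρ.injective
        rw [← hwcs i hi, ← hwcs j hj, congrArg Prod.snd he]
      have hwX : ∀ i, i ≠ iδ → i ≠ iα → w i ≠ X iα := by
        intro i hA hB he
        apply hB; apply ρ.injective
        rw [hρ2, ← hwcs i hA, congrArg Prod.snd he]
      have hwY : ∀ i, i ≠ iδ → i ≠ iπ → w i ≠ Y jγ := by
        intro i hA hB he
        apply hB; apply ρ.injective
        rw [hρ3, ← hwcs i hA, congrArg Prod.snd he]
      have hjδγ : jδ ≠ jγ := by
        intro he
        have hQα : enumQ iα = enumQ iδ := by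
          rw [← hjγ, ← he, ← Y1, ← hδ, X1]
        exact hiαδ (henumQ hQα)
      obtain ⟨σ, hσl⟩ := exists_perm_prescribe [(iδ, jδ), (iπ, jγ), (iα, jtA)]
        (by simp [Ne.symm hπ1, Ne.symm hiαδ, hπ2])
        (by simp [hjδγ, Ne.symm htA1, Ne.symm htA2])
      have hσδ : σ iδ = jδ := hσl (iδ, jδ) (by simp)
      have hσπ : σ iπ = jγ := hσl (iπ, jγ) (by simp)
      have hσα : σ iα = jtA := hσl (iα, jtA) (by simp)
      have hσneγ : ∀ i, i ≠ iπ → σ i ≠ jγ := by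
        intro i hi he
        exact hi (σ.injective (he.trans hσπ.symm))
      set cls : Fin (k+1) → Fin 4 := fun i =>
        if i = iδ then 0 else if i = iα then 1 else if i = iπ then 2 else 3 with hclsdef
      have hclsval : ∀ i, cls i =
          (if i = iδ then 0 else if i = iα then 1 else if i = iπ then 2 else 3 : Fin 4) :=
        fun i => rfl
      have hcvδ : cls iδ = 0 := by rw [hclsval]; simp
      have hcvα : cls iα = 1 := by rw [hclsval]; simp [hiαδ]
      have hcvπ : cls iπ = 2 := by rw [hclsval]; simp [hπ1, hπ2]
      have hinv : ∀ i, (i = iδ ∨ i = iα ∨ i = iπ) ∨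
          (cls i = 3 ∧ i ≠ iδ ∧ i ≠ iα ∧ i ≠ iπ) := by
        intro i
        by_cases hA : i = iδ
        · exact Or.inl (Or.inl hA)
        by_cases hB : i = iα
        · exact Or.inl (Or.inr (Or.inl hB))
        by_cases hC : i = iπ
        · exact Or.inl (Or.inr (Or.inr hC))
        exact Or.inr ⟨by rw [hclsval]; simp [hA, hB, hC], hA, hB, hC⟩
      have hinv0 : ∀ i, cls i = 0 → i = iδ := by
        intro i h
        rcases hinv i with (rfl | rfl | rfl) | ⟨h3, _, _, _⟩
        · rfl
        · rw [hcvα] at h; exact absurd h (by decide)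
        · rw [hcvπ] at h; exact absurd h (by decide)
        · rw [h3] at h; exact absurd h (by decide)
      have hinv1 : ∀ i, cls i = 1 → i = iα := by
        intro i h
        rcases hinv i with (rfl | rfl | rfl) | ⟨h3, _, _, _⟩
        · rw [hcvδ] at h; exact absurd h (by decide)
        · rfl
        · rw [hcvπ] at h; exact absurd h (by decide)
        · rw [h3] at h; exact absurd h (by decide)
      have hinv2 : ∀ i, cls i = 2 → i = iπ := by
        intro i h
        rcases hinv i with (rfl | rfl | rfl) | ⟨h3, _, _, _⟩
        · rw [hcvδ] at h; exact absurd h (by decide)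
        · rw [hcvα] at h; exact absurd h (by decide)
        · rfl
        · rw [h3] at h; exact absurd h (by decide)
      have hinv3 : ∀ i, cls i = 3 → i ≠ iδ ∧ i ≠ iα ∧ i ≠ iπ := by
        intro i h
        rcases hinv i with (rfl | rfl | rfl) | ⟨h3, hA, hB, hC⟩
        · rw [hcvδ] at h; exact absurd h (by decide)
        · rw [hcvα] at h; exact absurd h (by decide)
        · rw [hcvπ] at h; exact absurd h (by decide)
        · exact ⟨hA, hB, hC⟩
      have hvY : ∀ j, adj0 (Y j).1 Q' := fun j => by rw [Y1]; exact hadjR j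
      apply scheme adj0 adjH Q Q' hQQ V V' enumQ henumQ hadjQ enumR henumR hadjR hsurjR
        hsuppQ hsuppR pickQ genQ hpickQ hgenQ pickR genR hpickR hgenR X Y
        (fun i => rfl) (fun j => rfl) cls σ w (enumQ iα) iα jγ rfl hjγ hγQ hγR
      -- SD
      · intro i j h
        have he := huniq i ⟨j, h⟩
        subst he
        refine ⟨hcvδ, ?_⟩
        rw [hσδ]
        exact hjδuniq j h
      -- S0
      · intro i h
        rcases hinv0 i h with rfl
        rw [hσδ]
        exact hδ
      -- S3a
      · intro i h
        rcases hinv1 i h with rfl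
        refine ⟨hγR, ?_⟩
        rw [hσα]
        intro he
        exact Ne.symm htA2 (henumR (hjγ.trans he))
      -- S3b
      · intro i h
        rcases hinv2 i h with rfl
        refine ⟨by rw [hσπ, hjγ], ?_⟩
        exact fun he => hπ2 (henumQ he)
      -- S3c
      · intro i h
        obtain ⟨hA, hB, hC⟩ := hinv3 i h
        refine ⟨hw1 i, ?_, ?_⟩
        · exact fun he => hB (henumQ he)
        · intro he
          exact hσneγ i hC (henumR (he.trans hjγ.symm))
      -- S4
      · intro i j hi hj he
        exact hwinj i j (hinv3 i hi).1 (hinv3 j hj).1 he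
      -- S6
      · intro i j hi hj
        rcases hinv2 i hi with rfl
        rw [hσπ]
        exact fun he => hwY j (hinv3 j hj).1 (hinv3 j hj).2.2 he.symm
      -- S7
      · intro i j hi hj hij
        exact absurd ((hinv1 i hi).trans (hinv1 j hj).symm) hij
      -- S8
      · intro i j hi hj
        rcases hinv1 i hi with rfl
        intro he
        obtain ⟨hA, hB, hC⟩ := hinv3 j hj
        have hv1 : adj0 (X iα).1 Q' := by rw [X1]; exact hγR
        have hne1 : (X iα).1 ≠ (Y (σ iα)).1 := by
          rw [X1, Y1, hσα]
          intro hh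
          exact Ne.symm htA2 (henumR (hjγ.trans hh))
        have hbA := hgenR (X iα) (Y (σ iα)) hv1 (hvY _) hne1
        have hvw : adj0 (w j).1 Q' := by rw [hw1]; exact hγR
        have hnew : (w j).1 ≠ (Y (σ j)).1 := by
          rw [hw1, Y1]
          intro hh
          exact hσneγ j hC (henumR (hjγ.trans hh)).symm
        have hFj := hgenR (w j) (Y (σ j)) hvw (hvY _) hnew
        have h1 : adjH (X iα) (Q', genR (w j) (Y (σ j))) := by
          rw [← he]; exact hbA.1
        have := nodeEqR _ _ _ h1 hFj.1 (by rw [X1, hw1])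
        exact hwX j hA hB this.symm
      -- S9a
      · intro i h
        rcases hinv2 i h with rfl
        rw [hσπ]
        exact fun he => hXYαγ he.symm
      -- S9b
      · intro i h
        exact hwX i (hinv3 i h).1 (hinv3 i h).2.1
      -- S10
      · intro i h
        exact hwY i (hinv3 i h).1 (hinv3 i h).2.2

    · -- CASE 3 : no direct index
      push_neg at hD1
      have h0 : ∀ i j, X i ≠ Y j := hD1
      obtain ⟨iπ, hπ1, hπ2⟩ := fin_exists_ne_ne (by omega : 3 ≤ k+1) i1 i2
      obtain ⟨jt0, ht01, ht02⟩ := fin_exists_ne_ne (by omega : 3 ≤ k+1) j1 j2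
      have hX11 : (X i1).1 = p1 := by rw [X1, hi1]
      have hY11 : (Y j1).1 = p1 := by rw [Y1, hj1]
      have hξη : (X i1).2 ≠ (Y j1).2 := by
        intro he
        exact h0 i1 j1 (Prod.ext (hX11.trans hY11.symm) he)
      have hlξ : Fin.last k ≠ (X i1).2.castSucc := (Fin.castSucc_lt_last _).ne'
      have hlη : Fin.last k ≠ (Y j1).2.castSucc := (Fin.castSucc_lt_last _).ne'
      have hξη' : (X i1).2.castSucc ≠ (Y j1).2.castSucc :=
        fun he => hξη (Fin.castSucc_injective _ he)
      obtain ⟨ρ, hρ⟩ := exists_perm_prescribe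
        [(i1, Fin.last k), (i2, (X i1).2.castSucc), (iπ, (Y j1).2.castSucc)]
        (by simp [hi12, Ne.symm hπ1, Ne.symm hπ2])
        (by simp [hlξ, hlη, hξη'])
      have hρ1 : ρ i1 = Fin.last k := hρ (i1, Fin.last k) (by simp)
      have hρ2 : ρ i2 = (X i1).2.castSucc := hρ (i2, (X i1).2.castSucc) (by simp)
      have hρ3 : ρ iπ = (Y j1).2.castSucc := hρ (iπ, (Y j1).2.castSucc) (by simp)
      set w : Fin (k+1) → ν0 × Fin k := fun i =>
        (p1, if h : ρ i = Fin.last k then (⟨0, hk0⟩ : Fin k) else (ρ i).castPred h) with hwdef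
      have hw1 : ∀ i, (w i).1 = p1 := fun i => rfl
      have hwcs : ∀ i, i ≠ i1 → ((w i).2).castSucc = ρ i := by
        intro i hi
        have hne : ρ i ≠ Fin.last k := fun he => hi (ρ.injective (he.trans hρ1.symm))
        simp only [hwdef, dif_neg hne]
        exact Fin.castSucc_castPred _ _
      have hwinj : ∀ i j, i ≠ i1 → j ≠ i1 → w i = w j → i = j := by
        intro i j hi hj he
        apply ρ.injective
        rw [← hwcs i hi, ← hwcs j hj, congrArg Prod.snd he]
      have hwX1 : ∀ i, i ≠ i1 → i ≠ i2 → w i ≠ X i1 := by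
        intro i hA hB he
        apply hB; apply ρ.injective
        rw [hρ2, ← hwcs i hA, congrArg Prod.snd he]
      have hwY1 : ∀ i, i ≠ i1 → i ≠ iπ → w i ≠ Y j1 := by
        intro i hA hB he
        apply hB; apply ρ.injective
        rw [hρ3, ← hwcs i hA, congrArg Prod.snd he]
      have hvX1' : adj0 (X i1).1 Q' := by rw [X1, hi1]; exact hp1'
      have hvX2 : adj0 (X i2).1 Q' := by rw [X1, hi2]; exact hp2'
      have hvY : ∀ j, adj0 (Y j).1 Q' := fun j => by rw [Y1]; exact hadjR j
      have hne2t : (X i2).1 ≠ (Y jt0).1 := by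
        rw [X1, hi2, Y1]
        exact fun he => Ne.symm ht02 (henumR (hj2.trans he))
      have hF0 := hgenR (X i2) (Y jt0) hvX2 (hvY jt0) hne2t
      have hws := hpickR (genR (X i2) (Y jt0)) p1 hp1'
      set wstar : ν0 × Fin k := pickR (genR (X i2) (Y jt0)) p1 with hwsdef
      set cls : Fin (k+1) → Fin 4 := fun i =>
        if i = i1 then 1 else if i = i2 then 1 else if i = iπ then 2 else 3 with hclsdef
      have hclsval : ∀ i, cls i =
          (if i = i1 then 1 else if i = i2 then 1 else if i = iπ then 2 else 3 : Fin 4) :=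
        fun i => rfl
      have hcv1 : cls i1 = 1 := by rw [hclsval]; simp
      have hcv2 : cls i2 = 1 := by rw [hclsval]; simp [Ne.symm hi12]
      have hcvπ : cls iπ = 2 := by rw [hclsval]; simp [hπ1, hπ2]
      have hinv : ∀ i, (i = i1 ∨ i = i2 ∨ i = iπ) ∨
          (cls i = 3 ∧ i ≠ i1 ∧ i ≠ i2 ∧ i ≠ iπ) := by
        intro i
        by_cases hA : i = i1
        · exact Or.inl (Or.inl hA)
        by_cases hB : i = i2
        · exact Or.inl (Or.inr (Or.inl hB))
        by_cases hC : i = iπ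
        · exact Or.inl (Or.inr (Or.inr hC))
        exact Or.inr ⟨by rw [hclsval]; simp [hA, hB, hC], hA, hB, hC⟩
      have hclsne0 : ∀ i, cls i ≠ 0 := by
        intro i h
        rcases hinv i with (rfl | rfl | rfl) | ⟨h3, _, _, _⟩
        · rw [hcv1] at h; exact absurd h (by decide)
        · rw [hcv2] at h; exact absurd h (by decide)
        · rw [hcvπ] at h; exact absurd h (by decide)
        · rw [h3] at h; exact absurd h (by decide)
      have hinv1 : ∀ i, cls i = 1 → i = i1 ∨ i = i2 := by
        intro i h
        rcases hinv i with (rfl | rfl | rfl) | ⟨h3, _, _, _⟩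
        · exact Or.inl rfl
        · exact Or.inr rfl
        · rw [hcvπ] at h; exact absurd h (by decide)
        · rw [h3] at h; exact absurd h (by decide)
      have hinv2 : ∀ i, cls i = 2 → i = iπ := by
        intro i h
        rcases hinv i with (rfl | rfl | rfl) | ⟨h3, _, _, _⟩
        · rw [hcv1] at h; exact absurd h (by decide)
        · rw [hcv2] at h; exact absurd h (by decide)
        · rfl
        · rw [h3] at h; exact absurd h (by decide)
      have hinv3 : ∀ i, cls i = 3 → i ≠ i1 ∧ i ≠ i2 ∧ i ≠ iπ := by
        intro i h
        rcases hinv i with (rfl | rfl | rfl) | ⟨h3, hA, hB, hC⟩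
        · rw [hcv1] at h; exact absurd h (by decide)
        · rw [hcv2] at h; exact absurd h (by decide)
        · rw [hcvπ] at h; exact absurd h (by decide)
        · exact ⟨hA, hB, hC⟩
      have hmain : ∀ σ : Equiv.Perm (Fin (k+1)), σ iπ = j1 → σ i2 = jt0 →
          (genR (X i1) (Y (σ i1)) ≠ genR (X i2) (Y (σ i2))) →
          (∀ j, cls j = 3 → genR (X i2) (Y (σ i2)) ≠ genR (w j) (Y (σ j))) →
          ∃ p : Fin (k + 1) → (bipGraph adjH).Walk (Sum.inr (Q, V)) (Sum.inr (Q', V')),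
            (∀ i, (p i).IsPath ∧ (p i).length ≤ 6) ∧ PairwiseInternallyDisjoint p := by
        intro σ hσπ hσ2 hS7b hS8b
        have hσne1 : ∀ i, i ≠ iπ → σ i ≠ j1 := by
          intro i hi he
          exact hi (σ.injective (he.trans hσπ.symm))
        have hvgen : ∀ i, i = i1 ∨ i = i2 → σ i ≠ j1 →
            adjH (X i) (Q', genR (X i) (Y (σ i))) ∧
            adjH (Y (σ i)) (Q', genR (X i) (Y (σ i))) := by
          intro i hi hσi
          have h1 : adj0 (X i).1 Q' := by
            rcases hi with rfl | rfl
            · exact hvX1'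
            · exact hvX2
          have h3 : (X i).1 ≠ (Y (σ i)).1 := by
            rcases hi with rfl | rfl
            · rw [X1, hi1, Y1]
              intro he
              exact hσi (henumR (hj1.trans he)).symm
            · rw [X1, hi2, Y1, hσ2]
              exact fun he => Ne.symm ht02 (henumR (hj2.trans he))
          have := hgenR (X i) (Y (σ i)) h1 (hvY _) h3
          exact ⟨this.1, this.2.1⟩
        have hFjv : ∀ j, cls j = 3 →
            adjH (w j) (Q', genR (w j) (Y (σ j))) ∧
            adjH (Y (σ j)) (Q', genR (w j) (Y (σ j))) := by
          intro j hj
          obtain ⟨hA, _, hC⟩ := hinv3 j hj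
          have h1 : adj0 (w j).1 Q' := by rw [hw1]; exact hp1'
          have h3 : (w j).1 ≠ (Y (σ j)).1 := by
            rw [hw1, Y1]
            intro he
            exact hσne1 j hC (henumR (hj1.trans he)).symm
          have := hgenR (w j) (Y (σ j)) h1 (hvY _) h3
          exact ⟨this.1, this.2.1⟩
        apply scheme adj0 adjH Q Q' hQQ V V' enumQ henumQ hadjQ enumR henumR hadjR hsurjR
          hsuppQ hsuppR pickQ genQ hpickQ hgenQ pickR genR hpickR hgenR X Y
          (fun i => rfl) (fun j => rfl) cls σ w p1 i1 j1 hi1 hj1 hp1 hp1'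
        -- SD
        · exact fun i j h => absurd h (h0 i j)
        -- S0
        · exact fun i h => absurd h (hclsne0 i)
        -- S3a
        · intro i h
          rcases hinv1 i h with rfl | rfl
          · refine ⟨by rw [hi1]; exact hp1', ?_⟩
            rw [hi1]
            intro he
            exact hσne1 i (Ne.symm hπ1) (henumR (hj1.trans he)).symm
          · refine ⟨by rw [hi2]; exact hp2', ?_⟩
            rw [hi2, hσ2]
            exact fun he => Ne.symm ht02 (henumR (hj2.trans he))
        -- S3b
        · intro i h
          rcases hinv2 i h with rfl
          refine ⟨by rw [hσπ, hj1], ?_⟩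
          intro he
          exact hπ1 (henumQ (he.trans hi1.symm))
        -- S3c
        · intro i h
          obtain ⟨hA, hB, hC⟩ := hinv3 i h
          refine ⟨hw1 i, ?_, ?_⟩
          · exact fun he => hA (henumQ (he.trans hi1.symm))
          · intro he
            exact hσne1 i hC (henumR (he.trans hj1.symm))
        -- S4
        · intro i j hi hj he
          exact hwinj i j (hinv3 i hi).1 (hinv3 j hj).1 he
        -- S6
        · intro i j hi hj
          rcases hinv2 i hi with rfl
          rw [hσπ]
          exact fun he => hwY1 j (hinv3 j hj).1 (hinv3 j hj).2.2 he.symm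
        -- S7
        · intro i j hi hj hij
          rcases hinv1 i hi with rfl | rfl <;> rcases hinv1 j hj with rfl | rfl
          · exact absurd rfl hij
          · exact hS7b
          · exact Ne.symm hS7b
          · exact absurd rfl hij
        -- S8
        · intro i j hi hj
          rcases hinv1 i hi with rfl | rfl
          · intro he
            have hbA := hvgen i (Or.inl rfl) (hσne1 i (Ne.symm hπ1))
            have h1 : adjH (X i) (Q', genR (w j) (Y (σ j))) := by
              rw [← he]; exact hbA.1
            have h2 : adjH (w j) (Q', genR (w j) (Y (σ j))) := (hFjv j hj).1
            have := nodeEqR _ _ _ h1 h2 (by rw [hX11, hw1])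
            exact hwX1 j (hinv3 j hj).1 (hinv3 j hj).2.1 this.symm
          · exact hS8b j hj
        -- S9a
        · intro i h
          rcases hinv2 i h with rfl
          rw [hσπ]
          exact fun he => h0 i1 j1 he.symm
        -- S9b
        · intro i h
          exact hwX1 i (hinv3 i h).1 (hinv3 i h).2.1
        -- S10
        · intro i h
          exact hwY1 i (hinv3 i h).1 (hinv3 i h).2.2
      by_cases hbr : wstar = X i1 ∨ wstar = Y j1
      · -- branch b2 : the p1-node of F0 is X i1 or Y j1 ; send the A-path to y_{p2}
        obtain ⟨σ, hσl⟩ := exists_perm_prescribe [(iπ, j1), (i2, jt0), (i1, j2)]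
          (by simp [hπ2, hπ1, Ne.symm hi12])
          (by simp [ht01, ht02, Ne.symm ht01, hj12])
        have hσπ : σ iπ = j1 := hσl (iπ, j1) (by simp)
        have hσ2 : σ i2 = jt0 := hσl (i2, jt0) (by simp)
        have hσ1 : σ i1 = j2 := hσl (i1, j2) (by simp)
        apply hmain σ hσπ hσ2
        · -- hS7b via the p2-group nodes
          intro he
          have hne1 : (X i1).1 ≠ (Y (σ i1)).1 := by
            rw [X1, hi1, Y1, hσ1]
            exact fun hh => hp12 (hh.trans hj2)
          have hbA := hgenR (X i1) (Y (σ i1)) hvX1' (hvY _) hne1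
          have h1 : adjH (Y j2) (Q', genR (X i2) (Y (σ i2))) := by
            rw [← he, ← hσ1]; exact hbA.2.1
          have h2 : adjH (X i2) (Q', genR (X i2) (Y (σ i2))) := by
            rw [hσ2]; exact hF0.1
          have := nodeEqR _ _ _ h1 h2 (by rw [Y1, hj2, X1, hi2])
          exact h0 i2 j2 this.symm
        · -- hS8b : the p1-node of F0 is not an internal crossing node
          intro j hj he
          rw [hσ2] at he
          have hFj : adjH (w j) (Q', genR (w j) (Y (σ j))) := by
            obtain ⟨hA, _, hC⟩ := hinv3 j hj
            have h1 : adj0 (w j).1 Q' := by rw [hw1]; exact hp1'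
            have h3 : (w j).1 ≠ (Y (σ j)).1 := by
              rw [hw1, Y1]
              intro hh
              exact hC (σ.injective ((henumR (hj1.trans hh)).symm ▸ hσπ.symm ▸ rfl : σ j = σ iπ))
            exact (hgenR (w j) (Y (σ j)) h1 (hvY _) h3).1
          have h1 : adjH wstar (Q', genR (w j) (Y (σ j))) := by
            rw [← he]; exact hws.2.1
          have := nodeEqR _ _ _ h1 hFj (by rw [hws.1, hw1])
          rcases hbr with hb | hb
          · exact hwX1 j (hinv3 j hj).1 (hinv3 j hj).2.1 (this.symm.trans hb)
          · exact hwY1 j (hinv3 j hj).1 (hinv3 j hj).2.2 (this.symm.trans hb)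
      · -- branch b1 : the p1-node of F0 is a fresh crossing node
        push_neg at hbr
        obtain ⟨hbr1, hbr2⟩ := hbr
        have hζξ : wstar.2 ≠ (X i1).2 :=
          fun he => hbr1 (Prod.ext (hws.1.trans hX11.symm) he)
        have hζη : wstar.2 ≠ (Y j1).2 :=
          fun he => hbr2 (Prod.ext (hws.1.trans hY11.symm) he)
        have hk3 : 3 ≤ k := fin_three_le (X i1).2 (Y j1).2 wstar.2
          hξη (Ne.symm hζξ) (Ne.symm hζη)
        obtain ⟨jtA, htA1, htA2, htA3⟩ :=
          fin_exists_ne_ne_ne (by omega : 4 ≤ k+1) j1 j2 jt0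
        set istar : Fin (k+1) := ρ.symm wstar.2.castSucc with histardef
        have hρistar : ρ istar = wstar.2.castSucc := ρ.apply_symm_apply _
        have histar1 : istar ≠ i1 := by
          intro he
          rw [he, hρ1] at hρistar
          exact (Fin.castSucc_lt_last wstar.2).ne' hρistar
        have histar2 : istar ≠ i2 := by
          intro he
          rw [he, hρ2] at hρistar
          exact hζξ (Fin.castSucc_injective _ hρistar).symm
        have histarπ : istar ≠ iπ := by
          intro he
          rw [he, hρ3] at hρistar
          exact hζη (Fin.castSucc_injective _ hρistar).symm
        have hwistar : w istar = wstar := by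
          refine Prod.ext (by rw [hw1, hws.1]) ?_
          apply Fin.castSucc_injective
          rw [hwcs istar histar1, hρistar]
        obtain ⟨σ, hσl⟩ := exists_perm_prescribe
          [(iπ, j1), (i2, jt0), (i1, jtA), (istar, j2)]
          (by
            simp [hπ2, hπ1, Ne.symm hi12, Ne.symm histarπ, Ne.symm histar2, Ne.symm histar1])
          (by simp [ht01, ht02, Ne.symm ht01, hj12, Ne.symm htA1, Ne.symm htA3, htA2])
        have hσπ : σ iπ = j1 := hσl (iπ, j1) (by simp)
        have hσ2 : σ i2 = jt0 := hσl (i2, jt0) (by simp)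
        have hσ1 : σ i1 = jtA := hσl (i1, jtA) (by simp)
        have hσs : σ istar = j2 := hσl (istar, j2) (by simp)
        apply hmain σ hσπ hσ2
        · -- hS7b via the p1-group nodes : X i1 vs wstar
          intro he
          have hne1 : (X i1).1 ≠ (Y (σ i1)).1 := by
            rw [X1, hi1, Y1, hσ1]
            exact fun hh => Ne.symm htA1 (henumR (hj1.trans hh))
          have hbA := hgenR (X i1) (Y (σ i1)) hvX1' (hvY _) hne1
          have h1 : adjH (X i1) (Q', genR (X i2) (Y (σ i2))) := by
            rw [← he]; exact hbA.1
          have h2 : adjH wstar (Q', genR (X i2) (Y (σ i2))) := by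
            rw [hσ2]; exact hws.2.1
          have := nodeEqR _ _ _ h1 h2 (by rw [hX11, hws.1])
          exact hbr1 this.symm
        · -- hS8b : only the istar-path can clash, but then the p2-nodes separate
          intro j hj he
          rw [hσ2] at he
          have hFj := hgenR (w j) (Y (σ j))
            (by rw [hw1]; exact hp1') (hvY _)
            (by
              rw [hw1, Y1]
              intro hh
              exact (hinv3 j hj).2.2
                (σ.injective ((henumR (hj1.trans hh)).symm ▸ hσπ.symm ▸ rfl : σ j = σ iπ)))
          have h1 : adjH wstar (Q', genR (w j) (Y (σ j))) := by
            rw [← he]; exact hws.2.1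
          have hwj : wstar = w j := nodeEqR _ _ _ h1 hFj.1 (by rw [hws.1, hw1])
          have hjis : j = istar := hwinj j istar (hinv3 j hj).1 histar1
            (hwj.symm.trans hwistar.symm)
          rw [hjis, hσs] at he hFj
          have h2 : adjH (Y j2) (Q', genR (X i2) (Y jt0)) := by
            rw [he]; exact hFj.2.1
          have := nodeEqR _ _ _ hF0.1 h2 (by rw [X1, hi2, Y1, hj2])
          exact h0 i2 j2 this
end
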